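/- arXiv:2503.10534 — 5 statements merged into one kernel-verified Lean document; each statement's English description precedes it below -/
import Mathlib

section
/- (Proposition: dual optimality and zero duality gap) Suppose the problem setup and the saddle point hypotheses hold. Define, for y_i = (μ_i, λ_i) ∈ ℝ^m × ℝ^p, q_i(y_i) := inf_{x_i ∈ X_i} ( f_i(x_i) + ⟨μ_i, g_i(x_i)⟩ + ⟨λ_i, h_i(x_i)⟩ ) ∈ ℝ ∪ {−∞}, and q̃(y) := Σ_{i=1}^N q_i(y_i) for y = (y_1,…,y_N) ∈ ℝ^{N(m+p)}. Then: (i) y* ∈ K, H̃^{1/2}y* = 0, q̃(y*) is finite, and q̃(y) ≤ q̃(y*) for every y ∈ K with H̃^{1/2}y = 0 (so y* is optimal for the consensus dual problem); (ii) for every y ∈ K, −q̃(y) + ⟨z*, H̃^{1/2}y⟩ ≥ −q̃(y*) (so z* attains the supremum in the Lagrange dual of the consensus dual problem, and there is no duality gap between that problem and its dual). -/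
open Matrix
open scoped Kronecker

abbrev Blk (m p : ℕ) := Sum (Fin m) (Fin p)
abbrev Idx (N m p : ℕ) := Fin N × Blk m p

def projK {N m p : ℕ} (y : Idx N m p → ℝ) : Idx N m p → ℝ :=
  fun ij =>
    match ij with
    | (i, Sum.inl j) => max (y (i, Sum.inl j)) 0
    | (i, Sum.inr j) => y (i, Sum.inr j)

def projKpolar {N m p : ℕ} (y : Idx N m p → ℝ) : Idx N m p → ℝ :=
  fun ij =>
    match ij with
    | (i, Sum.inl j) => min (y (i, Sum.inl j)) 0
    | (_, Sum.inr _) => 0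

def memK {N m p : ℕ} (y : Idx N m p → ℝ) : Prop :=
  ∀ (i : Fin N) (j : Fin m), 0 ≤ y (i, Sum.inl j)

def IsMPInv {n : Type*} [Fintype n] [DecidableEq n] (M Md : Matrix n n ℝ) : Prop :=
  M * Md * M = M ∧ Md * M * Md = Md ∧ (M * Md)ᵀ = M * Md ∧ (Md * M)ᵀ = Md * M

def quadForm {n : Type*} [Fintype n] (M : Matrix n n ℝ) (w : n → ℝ) : ℝ :=
  w ⬝ᵥ (M *ᵥ w)

lemma mulVec_dot {n : Type*} [Fintype n] (M : Matrix n n ℝ) (u w : n → ℝ) :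
    (M *ᵥ u) ⬝ᵥ w = u ⬝ᵥ (Mᵀ *ᵥ w) := by
  rw [dotProduct_mulVec, Matrix.vecMul_transpose, dotProduct_comm]

lemma proj_eq_vec {n : Type*} [Fintype n] (P Q : Matrix n n ℝ)
    (hPs : Pᵀ = P) (hPi : P * P = P) (hQs : Qᵀ = Q) (hQi : Q * Q = Q)
    (hker : ∀ v, P *ᵥ v = 0 ↔ Q *ᵥ v = 0) (y : n → ℝ) : P *ᵥ y = Q *ᵥ y := by
  set a := P *ᵥ y with ha
  set b := Q *ᵥ y with hb
  have hPa : P *ᵥ a = a := by rw [ha, mulVec_mulVec, hPi]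
  have hQb : Q *ᵥ b = b := by rw [hb, mulVec_mulVec, hQi]
  have h1 : Q *ᵥ (y - b) = 0 := by
    rw [Matrix.mulVec_sub, hb, mulVec_mulVec, hQi, sub_self]
  have h2 : P *ᵥ (y - a) = 0 := by
    rw [Matrix.mulVec_sub, ha, mulVec_mulVec, hPi, sub_self]
  have hQa : Q *ᵥ (y - a) = 0 := (hker _).mp h2
  have hPb : P *ᵥ (y - b) = 0 := (hker _).mpr h1
  have hab : a = P *ᵥ b := by
    have h3 := Matrix.mulVec_sub P y b
    rw [hPb, ← ha] at h3
    exact (sub_eq_zero.mp h3.symm)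
  have hba : b = Q *ᵥ a := by
    have h3 := Matrix.mulVec_sub Q y a
    rw [hQa, ← hb] at h3
    exact (sub_eq_zero.mp h3.symm)
  have haa : a ⬝ᵥ a = b ⬝ᵥ a := by
    calc a ⬝ᵥ a = (P *ᵥ b) ⬝ᵥ a := by rw [← hab]
    _ = b ⬝ᵥ (Pᵀ *ᵥ a) := mulVec_dot ..
    _ = b ⬝ᵥ a := by rw [hPs, hPa]
  have hbb : b ⬝ᵥ b = a ⬝ᵥ b := by
    calc b ⬝ᵥ b = (Q *ᵥ a) ⬝ᵥ b := by rw [← hba]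
    _ = a ⬝ᵥ (Qᵀ *ᵥ b) := mulVec_dot ..
    _ = a ⬝ᵥ b := by rw [hQs, hQb]
  have hcomm : a ⬝ᵥ b = b ⬝ᵥ a := dotProduct_comm a b
  have hz : (a - b) ⬝ᵥ (a - b) = 0 := by
    rw [sub_dotProduct, dotProduct_sub, dotProduct_sub]
    linarith
  exact sub_eq_zero.mp (dotProduct_self_eq_zero.mp hz)

lemma swap_sum {N m p : ℕ} (a : Fin N → ℝ) (G : Fin N → Fin m → ℝ)
    (Hh : Fin N → Fin p → ℝ) (μ : Fin m → ℝ) (lam : Fin p → ℝ) :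
    ∑ i, (a i + (∑ j, μ j * G i j) + (∑ j, lam j * Hh i j))
      = (∑ i, a i) + (∑ j, μ j * ∑ i, G i j) + (∑ j, lam j * ∑ i, Hh i j) := by
  simp only [Finset.sum_add_distrib, Finset.mul_sum]
  rw [Finset.sum_comm (f := fun i j => μ j * G i j),
      Finset.sum_comm (f := fun i j => lam j * Hh i j)]

lemma sum_update {N : ℕ} {d : Fin N → ℕ} (G : ∀ j : Fin N, (Fin (d j) → ℝ) → ℝ)
    (xs : ∀ j, Fin (d j) → ℝ) (i : Fin N) (v : Fin (d i) → ℝ) :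
    ∑ j, G j (Function.update xs i v j)
      = (∑ j, G j (xs j)) - G i (xs i) + G i v := by
  rw [← Finset.sum_erase_add _ _ (Finset.mem_univ i),
      ← Finset.sum_erase_add _ (fun j => G j (xs j)) (Finset.mem_univ i)]
  rw [Function.update_self]
  have h : ∑ j ∈ Finset.univ.erase i, G j (Function.update xs i v j)
      = ∑ j ∈ Finset.univ.erase i, G j (xs j) := by
    refine Finset.sum_congr rfl fun j hj => ?_
    rw [Function.update_of_ne (Finset.mem_erase.mp hj).1]
  rw [h]; ring

lemma coe_sum_ereal {ι : Type*} (s : Finset ι) (r : ι → ℝ) :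
    ((∑ i ∈ s, r i : ℝ) : EReal) = ∑ i ∈ s, ((r i : ℝ) : EReal) := by
  classical
  induction s using Finset.induction with
  | empty => simp
  | @insert a s h ih => rw [Finset.sum_insert h, Finset.sum_insert h, EReal.coe_add, ih]

lemma ereal_final (a : EReal) (c r : ℝ) (h : a ≤ ((r + c : ℝ) : EReal)) :
    -((r : ℝ) : EReal) ≤ (c : EReal) + -a := by
  have h2 : -((r + c : ℝ) : EReal) ≤ -a := EReal.neg_le_neg_iff.mpr h
  have h3 : ((c : ℝ) : EReal) + -((r + c : ℝ) : EReal) ≤ (c : EReal) + -a :=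
    add_le_add le_rfl h2
  refine le_trans (le_of_eq ?_) h3
  rw [← EReal.coe_neg, ← EReal.coe_neg, ← EReal.coe_add]
  norm_num

noncomputable def Avg (N m p : ℕ) : Matrix (Idx N m p) (Idx N m p) ℝ :=
  Matrix.of fun ij kl => if ij.2 = kl.2 then (N : ℝ)⁻¹ else 0

lemma avg_symm (N m p : ℕ) : (Avg N m p)ᵀ = Avg N m p := by
  ext ⟨i, j⟩ ⟨k, l⟩
  simp [Avg, Matrix.transpose_apply, eq_comm]

lemma avg_mulVec {N m p : ℕ} (v : Idx N m p → ℝ) (i : Fin N) (j : Blk m p) :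
    (Avg N m p *ᵥ v) (i, j) = (N : ℝ)⁻¹ * ∑ k, v (k, j) := by
  simp only [Avg, Matrix.mulVec, dotProduct, Matrix.of_apply]
  rw [Fintype.sum_prod_type, Finset.sum_comm]
  have h : ∀ l : Blk m p, (∑ k : Fin N, (if j = l then (N:ℝ)⁻¹ else 0) * v (k, l))
      = if j = l then ∑ k : Fin N, (N:ℝ)⁻¹ * v (k, l) else 0 := by
    intro l; split <;> simp
  rw [Finset.sum_congr rfl (fun l _ => h l), Finset.sum_ite_eq]
  simp [Finset.mul_sum]

lemma avg_idem (N m p : ℕ) (hN : 1 ≤ N) : Avg N m p * Avg N m p = Avg N m p := by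
  have hN0 : (N : ℝ) ≠ 0 := by positivity
  ext ⟨i, j⟩ ⟨k, l⟩
  simp only [Matrix.mul_apply, Avg, Matrix.of_apply]
  rw [Fintype.sum_prod_type, Finset.sum_comm]
  have h : ∀ b : Blk m p, (∑ a : Fin N, (if j = b then (N:ℝ)⁻¹ else 0) * (if b = l then (N:ℝ)⁻¹ else 0))
      = if j = b then (if b = l then (N:ℝ)⁻¹ else 0) else 0 := by
    intro b
    split
    · split
      · simp [Finset.sum_const, Finset.card_univ]; field_simp
      · simp
    · simp
  rw [Finset.sum_congr rfl (fun b _ => h b), Finset.sum_ite_eq]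
  simp

lemma kron_mulVec {N m p : ℕ} (M : Matrix (Fin N) (Fin N) ℝ) (v : Idx N m p → ℝ)
    (i : Fin N) (j : Blk m p) :
    ((M ⊗ₖ (1 : Matrix (Blk m p) (Blk m p) ℝ)) *ᵥ v) (i, j)
      = (M *ᵥ fun k => v (k, j)) i := by
  simp [Matrix.mulVec, dotProduct, Fintype.sum_prod_type, Matrix.one_apply,
    mul_ite, ite_mul, mul_one, mul_zero, zero_mul, Finset.sum_ite_eq, Finset.sum_ite_eq']

theorem stmt4
    (N m p : ℕ) (hN : 1 ≤ N) (hm : 1 ≤ m) (hp : 1 ≤ p)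
    (d : Fin N → ℕ)
    (X : ∀ i : Fin N, Set (Fin (d i) → ℝ))
    (hXne : ∀ i, (X i).Nonempty) (hXcl : ∀ i, IsClosed (X i))
    (hXcv : ∀ i, Convex ℝ (X i))
    (f : ∀ i : Fin N, (Fin (d i) → ℝ) → ℝ)
    (hf : ∀ i, ConvexOn ℝ Set.univ (f i))
    (g : ∀ i : Fin N, (Fin (d i) → ℝ) → Fin m → ℝ)
    (hg : ∀ i j, ConvexOn ℝ Set.univ (fun xi => g i xi j))
    (B : ∀ i : Fin N, Matrix (Fin p) (Fin (d i)) ℝ) (c : ∀ i : Fin N, Fin p → ℝ)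
    (F : (∀ i, Fin (d i) → ℝ) → ℝ) (hF : ∀ x, F x = ∑ i, f i (x i))
    (tg : (∀ i, Fin (d i) → ℝ) → Idx N m p → ℝ)
    (htg1 : ∀ x (i : Fin N) (j : Fin m), tg x (i, Sum.inl j) = g i (x i) j)
    (htg2 : ∀ x (i : Fin N) (j : Fin p), tg x (i, Sum.inr j) = (B i *ᵥ x i + c i) j)
    (ρ : ℝ) (hρ : 0 < ρ)
    (PA PH PHt : Matrix (Fin N) (Fin N) ℝ)
    (hPA : PA.PosSemidef) (hPH : PH.PosSemidef) (hPHt : PHt.PosSemidef)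
    (hDdiag : (PA + ρ • PH).IsDiag) (hDpd : (PA + ρ • PH).PosDef)
    (hHHt : (PH - PHt).PosSemidef)
    (hPHnull : ∀ v : Fin N → ℝ, PH *ᵥ v = 0 ↔ ∃ t : ℝ, v = fun _ => t)
    (hPHtnull : ∀ v : Fin N → ℝ, PHt *ᵥ v = 0 ↔ ∃ t : ℝ, v = fun _ => t)
    (A Htld D : Matrix (Idx N m p) (Idx N m p) ℝ)
    (hA : A = PA ⊗ₖ (1 : Matrix (Blk m p) (Blk m p) ℝ))
    (hHtld : Htld = PHt ⊗ₖ (1 : Matrix (Blk m p) (Blk m p) ℝ))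
    (hD : D = A + ρ • (PH ⊗ₖ (1 : Matrix (Blk m p) (Blk m p) ℝ)))
    (Hhalf : Matrix (Idx N m p) (Idx N m p) ℝ)
    (hHhalfpsd : Hhalf.PosSemidef) (hHhalfsq : Hhalf * Hhalf = Htld)
    (Hhalfdag : Matrix (Idx N m p) (Idx N m p) ℝ) (hHhalfdag : IsMPInv Hhalf Hhalfdag)
    (xs : ∀ i, Fin (d i) → ℝ) (hxsX : ∀ i, xs i ∈ X i)
    (hxsg : ∀ j, (∑ i, g i (xs i) j) ≤ 0)
    (hxsh : ∀ j, (∑ i, (B i *ᵥ xs i + c i) j) = 0)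
    (mus : Fin m → ℝ) (hmus : ∀ j, 0 ≤ mus j) (lams : Fin p → ℝ)
    (hcs : (∑ j, mus j * ∑ i, g i (xs i) j) = 0)
    (hsaddle : ∀ w, (∀ i, w i ∈ X i) →
      F xs + (∑ j, mus j * ∑ i, g i (xs i) j) + (∑ j, lams j * ∑ i, (B i *ᵥ xs i + c i) j)
        ≤ F w + (∑ j, mus j * ∑ i, g i (w i) j) + (∑ j, lams j * ∑ i, (B i *ᵥ w i + c i) j))
    (ys : Idx N m p → ℝ) (hys : ∀ (i : Fin N) (j : Blk m p), ys (i, j) = Sum.elim mus lams j)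
    (zstar : Idx N m p → ℝ) (hzstar : zstar = Hhalfdag *ᵥ tg xs)
    (q : ∀ i : Fin N, (Blk m p → ℝ) → EReal)
    (hq : ∀ (i : Fin N) (yi : Blk m p → ℝ),
      q i yi = ⨅ xi : {v : Fin (d i) → ℝ // v ∈ X i},
        ((f i xi.1 + (∑ j, yi (Sum.inl j) * g i xi.1 j)
          + (∑ j, yi (Sum.inr j) * (B i *ᵥ xi.1 + c i) j) : ℝ) : EReal))
    :
    (memK ys ∧ Hhalf *ᵥ ys = 0
        ∧ (∃ r : ℝ, (∑ i, q i (fun j => ys (i, j))) = (r : EReal))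
        ∧ ∀ yv : Idx N m p → ℝ, memK yv → Hhalf *ᵥ yv = 0 →
            (∑ i, q i (fun j => yv (i, j))) ≤ ∑ i, q i (fun j => ys (i, j)))
      ∧ (∀ yv : Idx N m p → ℝ, memK yv →
          -(∑ i, q i (fun j => ys (i, j)))
            ≤ ((zstar ⬝ᵥ (Hhalf *ᵥ yv) : ℝ) : EReal) + -(∑ i, q i (fun j => yv (i, j)))) := by
  classical
  obtain ⟨h1, h2, h3, h4⟩ := hHhalfdag
  have hsymm : Hhalfᵀ = Hhalf := by
    have hh := hHhalfpsd.isHermitian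
    rwa [Matrix.IsHermitian, conjTranspose_eq_transpose_of_trivial] at hh
  set i0 : Fin N := ⟨0, hN⟩ with hi0
  set Lag : ∀ i : Fin N, (Fin (d i) → ℝ) → ℝ :=
    fun i v => f i v + (∑ j, mus j * g i v j) + (∑ j, lams j * (B i *ᵥ v + c i) j) with hLag
  have hqle : ∀ (i : Fin N) (yi : Blk m p → ℝ),
      q i yi ≤ ((f i (xs i) + (∑ j, yi (Sum.inl j) * g i (xs i) j)
        + (∑ j, yi (Sum.inr j) * (B i *ᵥ xs i + c i) j) : ℝ) : EReal) := by
    intro i yi; rw [hq]; exact iInf_le _ (⟨xs i, hxsX i⟩ : {v : Fin (d i) → ℝ // v ∈ X i})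
  have hswap : ∀ w : (∀ i, Fin (d i) → ℝ),
      F w + (∑ j, mus j * ∑ i, g i (w i) j) + (∑ j, lams j * ∑ i, (B i *ᵥ w i + c i) j)
        = ∑ i, Lag i (w i) := by
    intro w
    rw [hF]
    exact (swap_sum (fun i => f i (w i)) (fun i j => g i (w i) j)
      (fun i j => (B i *ᵥ w i + c i) j) mus lams).symm
  have hsaddleL : ∀ w : (∀ i, Fin (d i) → ℝ), (∀ i, w i ∈ X i) → ∑ i, Lag i (xs i) ≤ ∑ i, Lag i (w i) := by
    intro w hw
    have hs := hsaddle w hw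
    rwa [hswap xs, hswap w] at hs
  have hper : ∀ (i : Fin N) (v : Fin (d i) → ℝ), v ∈ X i → Lag i (xs i) ≤ Lag i v := by
    intro i v hv
    have hw : ∀ j, Function.update xs i v j ∈ X j := by
      intro j
      rcases eq_or_ne j i with rfl | hji
      · rwa [Function.update_self]
      · rw [Function.update_of_ne hji]; exact hxsX j
    have h5 := hsaddleL _ hw
    rw [sum_update Lag xs i v] at h5
    linarith
  have hLagsum : ∑ i, Lag i (xs i) = F xs := by
    rw [← hswap xs, hcs]
    have hz : (∑ j, lams j * ∑ i, (B i *ᵥ xs i + c i) j) = 0 :=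
      Finset.sum_eq_zero fun j _ => by rw [hxsh j, mul_zero]
    rw [hz]; ring
  have hysl : ∀ (i : Fin N) (j : Fin m), ys (i, Sum.inl j) = mus j := fun i j => hys i (Sum.inl j)
  have hysr : ∀ (i : Fin N) (j : Fin p), ys (i, Sum.inr j) = lams j := fun i j => hys i (Sum.inr j)
  have hqys : ∀ i : Fin N, q i (fun j => ys (i, j)) = ((Lag i (xs i) : ℝ) : EReal) := by
    intro i
    refine le_antisymm ?_ ?_
    · refine le_trans (hqle i _) (le_of_eq ?_)
      congr 1
      simp only [hysl, hysr, hLag]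
    · rw [hq]
      refine le_iInf ?_
      rintro ⟨v, hv⟩
      refine EReal.coe_le_coe_iff.mpr ?_
      have hE : f i v + (∑ j, ys (i, Sum.inl j) * g i v j)
          + (∑ j, ys (i, Sum.inr j) * (B i *ᵥ v + c i) j) = Lag i v := by
        simp only [hysl, hysr, hLag]
      rw [hE]
      exact hper i v hv
  have hsumys : (∑ i, q i (fun j => ys (i, j))) = ((F xs : ℝ) : EReal) := by
    rw [Finset.sum_congr rfl (fun i _ => hqys i), ← coe_sum_ereal, hLagsum]
  have hkerHtld : ∀ v : Idx N m p → ℝ,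
      Htld *ᵥ v = 0 ↔ ∀ j : Blk m p, ∃ t : ℝ, ∀ i, v (i, j) = t := by
    intro v
    constructor
    · intro h0 j
      have hcol : PHt *ᵥ (fun k => v (k, j)) = 0 := by
        funext i
        have hc := congrFun h0 (i, j)
        rw [hHtld, kron_mulVec] at hc
        simpa using hc
      obtain ⟨t, ht⟩ := (hPHtnull _).mp hcol
      exact ⟨t, fun i => congrFun ht i⟩
    · intro hc
      funext ij
      obtain ⟨i, j⟩ := ij
      rw [hHtld, kron_mulVec]
      have he : (fun k => v (k, j)) = fun _ => (hc j).choose :=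
        funext fun k => (hc j).choose_spec k
      rw [show PHt *ᵥ (fun k => v (k, j)) = 0 from (hPHtnull _).mpr ⟨_, he⟩]
      rfl
  have hkerH : ∀ v : Idx N m p → ℝ,
      Hhalf *ᵥ v = 0 ↔ ∀ j : Blk m p, ∃ t : ℝ, ∀ i, v (i, j) = t := by
    intro v
    rw [← hkerHtld v]
    constructor
    · intro h0
      rw [← hHhalfsq, ← mulVec_mulVec, h0, Matrix.mulVec_zero]
    · intro h0
      have hz : (Hhalf *ᵥ v) ⬝ᵥ (Hhalf *ᵥ v) = 0 := by
        rw [mulVec_dot, hsymm, mulVec_mulVec, hHhalfsq, h0, dotProduct_zero]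
      exact dotProduct_self_eq_zero.mp hz
  have hysker : Hhalf *ᵥ ys = 0 :=
    (hkerH ys).mpr fun j => ⟨Sum.elim mus lams j, fun i => hys i j⟩
  have hmemK : memK ys := fun i j => by rw [hysl]; exact hmus j
  have hclause4 : ∀ yv : Idx N m p → ℝ, memK yv → Hhalf *ᵥ yv = 0 →
      (∑ i, q i (fun j => yv (i, j))) ≤ ∑ i, q i (fun j => ys (i, j)) := by
    intro yv hK hk0
    have hconst : ∀ (j : Blk m p) (i : Fin N), yv (i, j) = yv (i0, j) := by
      intro j i
      obtain ⟨t, ht⟩ := (hkerH yv).mp hk0 j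
      rw [ht i, ht i0]
    have hstep : ∀ i : Fin N,
        q i (fun j => yv (i, j)) ≤ ((f i (xs i) + (∑ j, yv (i0, Sum.inl j) * g i (xs i) j)
          + (∑ j, yv (i0, Sum.inr j) * (B i *ᵥ xs i + c i) j) : ℝ) : EReal) := by
      intro i
      refine le_trans (hqle i _) (le_of_eq ?_)
      refine congrArg _ ?_
      have e1 : (∑ j, yv (i, Sum.inl j) * g i (xs i) j)
          = ∑ j, yv (i0, Sum.inl j) * g i (xs i) j :=
        Finset.sum_congr rfl fun j _ => by rw [hconst (Sum.inl j) i]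
      have e2 : (∑ j, yv (i, Sum.inr j) * (B i *ᵥ xs i + c i) j)
          = ∑ j, yv (i0, Sum.inr j) * (B i *ᵥ xs i + c i) j :=
        Finset.sum_congr rfl fun j _ => by rw [hconst (Sum.inr j) i]
      rw [e1, e2]
    have hreal : (∑ i, (f i (xs i) + (∑ j, yv (i0, Sum.inl j) * g i (xs i) j)
        + (∑ j, yv (i0, Sum.inr j) * (B i *ᵥ xs i + c i) j))) ≤ F xs := by
      rw [swap_sum (fun i => f i (xs i)) (fun i j => g i (xs i) j)
        (fun i j => (B i *ᵥ xs i + c i) j) (fun j => yv (i0, Sum.inl j))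
        (fun j => yv (i0, Sum.inr j)), ← hF xs]
      have t1 : (∑ j, yv (i0, Sum.inl j) * ∑ i, g i (xs i) j) ≤ 0 :=
        Finset.sum_nonpos fun j _ => mul_nonpos_of_nonneg_of_nonpos (hK i0 j) (hxsg j)
      have t2 : (∑ j, yv (i0, Sum.inr j) * ∑ i, (B i *ᵥ xs i + c i) j) = 0 :=
        Finset.sum_eq_zero fun j _ => by rw [hxsh j, mul_zero]
      linarith
    calc (∑ i, q i fun j => yv (i, j))
        ≤ ∑ i, ((f i (xs i) + (∑ j, yv (i0, Sum.inl j) * g i (xs i) j)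
          + (∑ j, yv (i0, Sum.inr j) * (B i *ᵥ xs i + c i) j) : ℝ) : EReal) :=
          Finset.sum_le_sum fun i _ => hstep i
      _ = ((∑ i, (f i (xs i) + (∑ j, yv (i0, Sum.inl j) * g i (xs i) j)
          + (∑ j, yv (i0, Sum.inr j) * (B i *ᵥ xs i + c i) j)) : ℝ) : EReal) :=
          (coe_sum_ereal _ _).symm
      _ ≤ ((F xs : ℝ) : EReal) := EReal.coe_le_coe_iff.mpr hreal
      _ = ∑ i, q i fun j => ys (i, j) := hsumys.symm
  refine ⟨⟨hmemK, hysker, ⟨F xs, hsumys⟩, hclause4⟩, ?_⟩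
  intro yv hK
  have hM' : Hhalf * Hhalfdagᵀ * Hhalf = Hhalf := by
    have ht := congrArg Matrix.transpose h1
    rwa [Matrix.transpose_mul, Matrix.transpose_mul, hsymm, ← mul_assoc] at ht
  have hP't : Hhalfdagᵀ * Hhalf = Hhalf * Hhalfdag := by
    calc Hhalfdagᵀ * Hhalf = Hhalfdagᵀ * Hhalfᵀ := by rw [hsymm]
      _ = (Hhalf * Hhalfdag)ᵀ := (Matrix.transpose_mul _ _).symm
      _ = Hhalf * Hhalfdag := h3
  have hP'i : (Hhalf * Hhalfdag) * (Hhalf * Hhalfdag) = Hhalf * Hhalfdag := by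
    rw [mul_assoc Hhalf Hhalfdag (Hhalf * Hhalfdag),
      ← mul_assoc Hhalfdag Hhalf Hhalfdag, h2]
  set P' := Hhalf * Hhalfdag with hP'
  have hP's : P'ᵀ = P' := h3
  have hkerP' : ∀ v, P' *ᵥ v = 0 ↔ Hhalf *ᵥ v = 0 := by
    intro v
    constructor
    · intro h0
      rw [← hP't] at h0
      calc Hhalf *ᵥ v = (Hhalf * Hhalfdagᵀ * Hhalf) *ᵥ v := by rw [hM']
        _ = Hhalf *ᵥ ((Hhalfdagᵀ * Hhalf) *ᵥ v) := by
            rw [mulVec_mulVec, mul_assoc]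
        _ = 0 := by rw [h0, Matrix.mulVec_zero]
    · intro h0
      rw [← hP't, ← mulVec_mulVec, h0, Matrix.mulVec_zero]
  set Qm := (1 : Matrix (Idx N m p) (Idx N m p) ℝ) - Avg N m p with hQm
  have hQs : Qmᵀ = Qm := by
    rw [hQm, Matrix.transpose_sub, Matrix.transpose_one, avg_symm]
  have hQi : Qm * Qm = Qm := by
    rw [hQm, Matrix.sub_mul, Matrix.one_mul, Matrix.mul_sub, Matrix.mul_one,
      avg_idem N m p hN]
    abel
  have hkerQ : ∀ v : Idx N m p → ℝ,
      Qm *ᵥ v = 0 ↔ ∀ j : Blk m p, ∃ t : ℝ, ∀ i, v (i, j) = t := by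
    intro v
    rw [hQm, Matrix.sub_mulVec, Matrix.one_mulVec, sub_eq_zero]
    constructor
    · intro h0 j
      refine ⟨(N : ℝ)⁻¹ * ∑ k, v (k, j), fun i => ?_⟩
      conv_lhs => rw [h0]
      rw [avg_mulVec]
    · intro hc
      funext ij
      obtain ⟨i, j⟩ := ij
      obtain ⟨t, ht⟩ := hc j
      rw [ht i, avg_mulVec]
      have hs : ∑ k, v (k, j) = N * t := by
        rw [Finset.sum_congr rfl fun k _ => ht k]
        simp [Finset.sum_const, mul_comm]
      rw [hs]
      have hN0 : (N : ℝ) ≠ 0 := by positivity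
      field_simp
  have hproj : P' *ᵥ yv = Qm *ᵥ yv :=
    proj_eq_vec P' Qm hP's hP'i hQs hQi
      (fun v => (hkerP' v).trans ((hkerH v).trans (hkerQ v).symm)) yv
  have hzdot : zstar ⬝ᵥ (Hhalf *ᵥ yv) = tg xs ⬝ᵥ (P' *ᵥ yv) := by
    rw [hzstar, mulVec_dot, mulVec_mulVec, hP't]
  have havg_nonpos : tg xs ⬝ᵥ (Avg N m p *ᵥ yv) ≤ 0 := by
    have expand : tg xs ⬝ᵥ (Avg N m p *ᵥ yv)
        = ∑ j : Blk m p, (∑ i, tg xs (i, j)) * ((N : ℝ)⁻¹ * ∑ k, yv (k, j)) := by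
      rw [dotProduct, Fintype.sum_prod_type, Finset.sum_comm]
      refine Finset.sum_congr rfl fun j _ => ?_
      rw [Finset.sum_mul]
      refine Finset.sum_congr rfl fun i _ => ?_
      rw [avg_mulVec]
    rw [expand, Fintype.sum_sum_type]
    have ha : (∑ jj : Fin m, (∑ i, tg xs (i, Sum.inl jj))
        * ((N : ℝ)⁻¹ * ∑ k, yv (k, Sum.inl jj))) ≤ 0 := by
      refine Finset.sum_nonpos fun jj _ => mul_nonpos_of_nonpos_of_nonneg ?_ ?_
      · rw [Finset.sum_congr rfl fun i _ => htg1 xs i jj]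
        exact hxsg jj
      · refine mul_nonneg (by positivity) (Finset.sum_nonneg fun k _ => hK k jj)
    have hb : (∑ jj : Fin p, (∑ i, tg xs (i, Sum.inr jj))
        * ((N : ℝ)⁻¹ * ∑ k, yv (k, Sum.inr jj))) = 0 := by
      refine Finset.sum_eq_zero fun jj _ => ?_
      rw [Finset.sum_congr rfl fun i _ => htg2 xs i jj, hxsh jj, zero_mul]
    linarith
  have hdotineq : yv ⬝ᵥ tg xs ≤ zstar ⬝ᵥ (Hhalf *ᵥ yv) := by
    rw [hzdot, hproj, hQm, Matrix.sub_mulVec, Matrix.one_mulVec, dotProduct_sub,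
      dotProduct_comm yv (tg xs)]
    linarith
  have hsum2 : (∑ i, (f i (xs i) + (∑ j, yv (i, Sum.inl j) * g i (xs i) j)
      + (∑ j, yv (i, Sum.inr j) * (B i *ᵥ xs i + c i) j))) = F xs + yv ⬝ᵥ tg xs := by
    have hd : yv ⬝ᵥ tg xs = ∑ i, ((∑ j, yv (i, Sum.inl j) * g i (xs i) j)
        + (∑ j, yv (i, Sum.inr j) * (B i *ᵥ xs i + c i) j)) := by
      rw [dotProduct, Fintype.sum_prod_type]
      refine Finset.sum_congr rfl fun i _ => ?_
      rw [Fintype.sum_sum_type]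
      congr 1
      · exact Finset.sum_congr rfl fun j _ => by rw [htg1]
      · exact Finset.sum_congr rfl fun j _ => by rw [htg2]
    rw [hd, hF xs, ← Finset.sum_add_distrib]
    exact Finset.sum_congr rfl fun i _ => by ring
  have hchain : (∑ i, q i (fun j => yv (i, j)))
      ≤ ((F xs + zstar ⬝ᵥ (Hhalf *ᵥ yv) : ℝ) : EReal) := by
    calc (∑ i, q i fun j => yv (i, j))
        ≤ ∑ i, ((f i (xs i) + (∑ j, yv (i, Sum.inl j) * g i (xs i) j)
          + (∑ j, yv (i, Sum.inr j) * (B i *ᵥ xs i + c i) j) : ℝ) : EReal) :=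
          Finset.sum_le_sum fun i _ => hqle i _
      _ = ((∑ i, (f i (xs i) + (∑ j, yv (i, Sum.inl j) * g i (xs i) j)
          + (∑ j, yv (i, Sum.inr j) * (B i *ᵥ xs i + c i) j)) : ℝ) : EReal) :=
          (coe_sum_ereal _ _).symm
      _ ≤ _ := EReal.coe_le_coe_iff.mpr (by rw [hsum2]; linarith)
  rw [hsumys]
  exact ereal_final _ _ _ hchain
end

section
/- (Lemma: indirect computation of the dual proximal step) Suppose the problem setup holds and each X_i is additionally compact. Then for any y^k, z^k ∈ ℝ^{N(m+p)} there exist y^{k+1} ∈ ℝ^{N(m+p)}, x^{k+1} ∈ X, and σ^{k+1} ∈ ℝ^{N(m+p)} such that: (i) x^{k+1} minimizes x ↦ f(x) + ⟨y^{k+1}, g̃(x)⟩ over X; (ii) −σ^{k+1} lies in the normal cone of K at y^{k+1}, i.e., y^{k+1} ∈ K and ⟨−σ^{k+1}, u − y^{k+1}⟩ ≤ 0 for all u ∈ K; (iii) y^{k+1} = D^{-1}(Ay^k − H̃^{1/2}z^k + g̃(x^{k+1}) + σ^{k+1}). Moreover, such x^{k+1} and y^{k+1} can be computed sequentially as follows: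 a minimizer over X of x ↦ f(x) + ½‖𝒫_K[Ay^k − H̃^{1/2}z^k + g̃(x)]‖²_{D^{-1}} exists, and for any such minimizer x^{k+1}, setting y^{k+1} := 𝒫_K[D^{-1}(Ay^k − H̃^{1/2}z^k + g̃(x^{k+1}))] and σ^{k+1} := −𝒫_{K°}[Ay^k − H̃^{1/2}z^k + g̃(x^{k+1})] yields (i), (ii) and (iii). -/
open Matrix
open scoped Kronecker

lemma sq_max_smooth (a b : ℝ) : max b 0 ^ 2 ≤ (max a 0 + (b - a)) ^ 2 := by
  rcases le_total b 0 with h | h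
  · rw [max_eq_right h]; nlinarith
  · rw [max_eq_left h]
    have h1 : b ≤ max a 0 + (b - a) := by nlinarith [le_max_left a (0:ℝ)]
    nlinarith

set_option maxHeartbeats 1600000 in
theorem stmt5
    (N m p : ℕ) (hN : 1 ≤ N) (hm : 1 ≤ m) (hp : 1 ≤ p)
    (d : Fin N → ℕ)
    (X : ∀ i : Fin N, Set (Fin (d i) → ℝ))
    (hXne : ∀ i, (X i).Nonempty) (hXcl : ∀ i, IsClosed (X i))
    (hXcv : ∀ i, Convex ℝ (X i))
    (f : ∀ i : Fin N, (Fin (d i) → ℝ) → ℝ)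
    (hf : ∀ i, ConvexOn ℝ Set.univ (f i))
    (g : ∀ i : Fin N, (Fin (d i) → ℝ) → Fin m → ℝ)
    (hg : ∀ i j, ConvexOn ℝ Set.univ (fun xi => g i xi j))
    (B : ∀ i : Fin N, Matrix (Fin p) (Fin (d i)) ℝ) (c : ∀ i : Fin N, Fin p → ℝ)
    (F : (∀ i, Fin (d i) → ℝ) → ℝ) (hF : ∀ x, F x = ∑ i, f i (x i))
    (tg : (∀ i, Fin (d i) → ℝ) → Idx N m p → ℝ)
    (htg1 : ∀ x (i : Fin N) (j : Fin m), tg x (i, Sum.inl j) = g i (x i) j)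
    (htg2 : ∀ x (i : Fin N) (j : Fin p), tg x (i, Sum.inr j) = (B i *ᵥ x i + c i) j)
    (ρ : ℝ) (hρ : 0 < ρ)
    (PA PH PHt : Matrix (Fin N) (Fin N) ℝ)
    (hPA : PA.PosSemidef) (hPH : PH.PosSemidef) (hPHt : PHt.PosSemidef)
    (hDdiag : (PA + ρ • PH).IsDiag) (hDpd : (PA + ρ • PH).PosDef)
    (hHHt : (PH - PHt).PosSemidef)
    (hPHnull : ∀ v : Fin N → ℝ, PH *ᵥ v = 0 ↔ ∃ t : ℝ, v = fun _ => t)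
    (hPHtnull : ∀ v : Fin N → ℝ, PHt *ᵥ v = 0 ↔ ∃ t : ℝ, v = fun _ => t)
    (A Htld D : Matrix (Idx N m p) (Idx N m p) ℝ)
    (hA : A = PA ⊗ₖ (1 : Matrix (Blk m p) (Blk m p) ℝ))
    (hHtld : Htld = PHt ⊗ₖ (1 : Matrix (Blk m p) (Blk m p) ℝ))
    (hD : D = A + ρ • (PH ⊗ₖ (1 : Matrix (Blk m p) (Blk m p) ℝ)))
    (Hhalf : Matrix (Idx N m p) (Idx N m p) ℝ)
    (hHhalfpsd : Hhalf.PosSemidef) (hHhalfsq : Hhalf * Hhalf = Htld)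
    (hXcp : ∀ i, IsCompact (X i))
    :
    ∀ yk zk : Idx N m p → ℝ,
      (∃ y1 : Idx N m p → ℝ, ∃ x1 : ∀ i, Fin (d i) → ℝ, ∃ σ1 : Idx N m p → ℝ,
          (∀ i, x1 i ∈ X i)
        ∧ (∀ w, (∀ i, w i ∈ X i) → F x1 + y1 ⬝ᵥ tg x1 ≤ F w + y1 ⬝ᵥ tg w)
        ∧ memK y1 ∧ (∀ u, memK u → (-σ1) ⬝ᵥ (u - y1) ≤ 0)
        ∧ y1 = D⁻¹ *ᵥ ((A *ᵥ yk) - (Hhalf *ᵥ zk) + tg x1 + σ1))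
      ∧ (∃ x1 : ∀ i, Fin (d i) → ℝ, (∀ i, x1 i ∈ X i) ∧ ∀ w, (∀ i, w i ∈ X i) →
          F x1 + (1 / 2) * quadForm D⁻¹ (projK ((A *ᵥ yk) - (Hhalf *ᵥ zk) + tg x1))
            ≤ F w + (1 / 2) * quadForm D⁻¹ (projK ((A *ᵥ yk) - (Hhalf *ᵥ zk) + tg w)))
      ∧ (∀ x1 : ∀ i, Fin (d i) → ℝ,
          ((∀ i, x1 i ∈ X i) ∧ ∀ w, (∀ i, w i ∈ X i) →
            F x1 + (1 / 2) * quadForm D⁻¹ (projK ((A *ᵥ yk) - (Hhalf *ᵥ zk) + tg x1))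
              ≤ F w + (1 / 2) * quadForm D⁻¹ (projK ((A *ᵥ yk) - (Hhalf *ᵥ zk) + tg w))) →
          (∀ w, (∀ i, w i ∈ X i) →
              F x1 + (projK (D⁻¹ *ᵥ ((A *ᵥ yk) - (Hhalf *ᵥ zk) + tg x1))) ⬝ᵥ tg x1
                ≤ F w + (projK (D⁻¹ *ᵥ ((A *ᵥ yk) - (Hhalf *ᵥ zk) + tg x1))) ⬝ᵥ tg w)
          ∧ memK (projK (D⁻¹ *ᵥ ((A *ᵥ yk) - (Hhalf *ᵥ zk) + tg x1)))
          ∧ (∀ u, memK u →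
              (projKpolar ((A *ᵥ yk) - (Hhalf *ᵥ zk) + tg x1)) ⬝ᵥ
                (u - projK (D⁻¹ *ᵥ ((A *ᵥ yk) - (Hhalf *ᵥ zk) + tg x1))) ≤ 0)
          ∧ projK (D⁻¹ *ᵥ ((A *ᵥ yk) - (Hhalf *ᵥ zk) + tg x1))
              = D⁻¹ *ᵥ ((A *ᵥ yk) - (Hhalf *ᵥ zk) + tg x1
                  + -projKpolar ((A *ᵥ yk) - (Hhalf *ᵥ zk) + tg x1))) := by
  classical
  -- Step A : D is diagonal with positive entries
  have hDsum : D = (PA + ρ • PH) ⊗ₖ (1 : Matrix (Blk m p) (Blk m p) ℝ) := by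
    rw [hD, hA, Matrix.add_kronecker, Matrix.smul_kronecker]
  have hDdiag' : D = Matrix.diagonal (fun ij : Idx N m p => (PA + ρ • PH) ij.1 ij.1) := by
    rw [hDsum]
    ext ⟨i, j⟩ ⟨i', j'⟩
    simp only [Matrix.kroneckerMap_apply, Matrix.diagonal_apply]
    by_cases hi : i = i'
    · subst hi
      by_cases hj : j = j'
      · subst hj; simp
      · simp [Matrix.one_apply, hj, Prod.ext_iff]
    · rw [hDdiag hi]
      simp [Prod.ext_iff, hi]
  have hdpos : ∀ ij : Idx N m p, 0 < (PA + ρ • PH) ij.1 ij.1 := by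
    intro ij
    exact hDpd.diag_pos
  have hDinv : D⁻¹ = Matrix.diagonal (fun ij : Idx N m p => ((PA + ρ • PH) ij.1 ij.1)⁻¹) := by
    apply Matrix.inv_eq_right_inv
    rw [hDdiag', Matrix.diagonal_mul_diagonal]
    have : (fun i : Idx N m p => (PA + ρ • PH) i.1 i.1 * ((PA + ρ • PH) i.1 i.1)⁻¹)
        = fun _ => (1 : ℝ) := funext fun ij => mul_inv_cancel₀ (hdpos ij).ne'
    rw [this, Matrix.diagonal_one]
  set e : Idx N m p → ℝ := fun ij => ((PA + ρ • PH) ij.1 ij.1)⁻¹ with he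
  have hepos : ∀ ij, 0 < e ij := fun ij => inv_pos.2 (hdpos ij)
  have hmul : ∀ w ij, (D⁻¹ *ᵥ w) ij = e ij * w ij := by
    intro w ij; rw [hDinv, Matrix.mulVec_diagonal]
  have hquad : ∀ u : Idx N m p → ℝ, quadForm D⁻¹ u = ∑ ij, e ij * u ij ^ 2 := by
    intro u
    unfold quadForm
    simp only [dotProduct, hmul]
    exact Finset.sum_congr rfl fun ij _ => by ring
  intro yk zk
  set qv : Idx N m p → ℝ := (A *ᵥ yk) - (Hhalf *ᵥ zk) with hqv
  -- key3 : the sequential computation yields all required properties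
  have key3 : ∀ x1 : ∀ i, Fin (d i) → ℝ,
      ((∀ i, x1 i ∈ X i) ∧ ∀ w, (∀ i, w i ∈ X i) →
        F x1 + (1 / 2) * quadForm D⁻¹ (projK (qv + tg x1))
          ≤ F w + (1 / 2) * quadForm D⁻¹ (projK (qv + tg w))) →
      (∀ w, (∀ i, w i ∈ X i) →
          F x1 + (projK (D⁻¹ *ᵥ (qv + tg x1))) ⬝ᵥ tg x1
            ≤ F w + (projK (D⁻¹ *ᵥ (qv + tg x1))) ⬝ᵥ tg w)
      ∧ memK (projK (D⁻¹ *ᵥ (qv + tg x1)))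
      ∧ (∀ u, memK u →
          (projKpolar (qv + tg x1)) ⬝ᵥ (u - projK (D⁻¹ *ᵥ (qv + tg x1))) ≤ 0)
      ∧ projK (D⁻¹ *ᵥ (qv + tg x1))
          = D⁻¹ *ᵥ (qv + tg x1 + -projKpolar (qv + tg x1)) := by
    rintro x1 ⟨hx1X, hx1min⟩
    set a : Idx N m p → ℝ := qv + tg x1 with ha
    set y1 : Idx N m p → ℝ := projK (D⁻¹ *ᵥ a) with hy1
    have hy1e : ∀ ij, y1 ij = e ij * projK a ij := by
      rintro ⟨i, j | j⟩
      · show max ((D⁻¹ *ᵥ a) (i, Sum.inl j)) 0 = e _ * max (a (i, Sum.inl j)) 0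
        rw [hmul, mul_max_of_nonneg _ _ (hepos (i, Sum.inl j)).le, mul_zero]
      · show (D⁻¹ *ᵥ a) (i, Sum.inr j) = e _ * a (i, Sum.inr j)
        exact hmul a _
    refine ⟨?_, ?_, ?_, ?_⟩
    · -- (i) minimization of the linearized objective
      intro w hw
      set Δ : Idx N m p → ℝ := tg w - tg x1 with hΔ
      set Cc : ℝ := ∑ ij, e ij * Δ ij ^ 2 / 2 with hCc
      have hCcnn : 0 ≤ Cc := Finset.sum_nonneg fun ij _ =>
        div_nonneg (mul_nonneg (hepos ij).le (sq_nonneg _)) (by norm_num)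
      have main : ∀ t : ℝ, 0 < t → t ≤ 1 →
          F x1 + y1 ⬝ᵥ tg x1 ≤ F w + y1 ⬝ᵥ tg w + t * Cc := by
        intro t ht ht1
        set xt : ∀ i, Fin (d i) → ℝ := fun i => (1 - t) • x1 i + t • w i with hxt
        have hxtX : ∀ i, xt i ∈ X i := fun i =>
          hXcv i (hx1X i) (hw i) (by linarith) ht.le (by ring)
        have hFt : F xt ≤ (1 - t) * F x1 + t * F w := by
          rw [hF xt, hF x1, hF w, Finset.mul_sum, Finset.mul_sum, ← Finset.sum_add_distrib]
          exact Finset.sum_le_sum fun i _ =>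
            (hf i).2 (Set.mem_univ _) (Set.mem_univ _) (by linarith) ht.le (by ring)
        have hcomp : ∀ ij : Idx N m p,
            e ij * projK (qv + tg xt) ij ^ 2 / 2 ≤
              e ij * projK a ij ^ 2 / 2 + t * (e ij * projK a ij * Δ ij)
                + t ^ 2 * (e ij * Δ ij ^ 2 / 2) := by
          rintro ⟨i, j | j⟩
          · have hgc : g i (xt i) j ≤ (1 - t) * g i (x1 i) j + t * g i (w i) j :=
              (hg i j).2 (Set.mem_univ _) (Set.mem_univ _) (by linarith) ht.le (by ring)
            have hd : Δ (i, Sum.inl j) = g i (w i) j - g i (x1 i) j := by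
              simp [hΔ, htg1]
            have hc : (qv + tg xt) (i, Sum.inl j) ≤ a (i, Sum.inl j) + t * Δ (i, Sum.inl j) := by
              simp only [ha, Pi.add_apply, htg1, hd]
              nlinarith
            have h1 : projK (qv + tg xt) (i, Sum.inl j) ≤
                max (a (i, Sum.inl j) + t * Δ (i, Sum.inl j)) 0 :=
              max_le_max hc le_rfl
            have h0 : (0:ℝ) ≤ projK (qv + tg xt) (i, Sum.inl j) := le_max_right _ _
            have h2 : projK (qv + tg xt) (i, Sum.inl j) ^ 2 ≤
                (max (a (i, Sum.inl j)) 0 + t * Δ (i, Sum.inl j)) ^ 2 := by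
              calc projK (qv + tg xt) (i, Sum.inl j) ^ 2
                  ≤ max (a (i, Sum.inl j) + t * Δ (i, Sum.inl j)) 0 ^ 2 := by nlinarith
                _ ≤ _ := by
                    have := sq_max_smooth (a (i, Sum.inl j))
                      (a (i, Sum.inl j) + t * Δ (i, Sum.inl j))
                    simpa using this
            have hpa : projK a (i, Sum.inl j) = max (a (i, Sum.inl j)) 0 := rfl
            rw [hpa]
            nlinarith [(hepos (i, Sum.inl j)).le, h2]
          · have hlin : (qv + tg xt) (i, Sum.inr j)
                = a (i, Sum.inr j) + t * Δ (i, Sum.inr j) := by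
              simp only [ha, Pi.add_apply, hΔ, Pi.sub_apply, htg2]
              simp only [hxt, Matrix.mulVec_add, Matrix.mulVec_smul, Pi.add_apply,
                Pi.smul_apply, smul_eq_mul]
              ring
            have hpk : ∀ u : Idx N m p → ℝ, projK u (i, Sum.inr j) = u (i, Sum.inr j) :=
              fun u => rfl
            rw [hpk, hpk, hlin]
            nlinarith [(hepos (i, Sum.inr j)).le]
        have hsum : (1 / 2) * quadForm D⁻¹ (projK (qv + tg xt)) ≤
            (1 / 2) * quadForm D⁻¹ (projK a) + t * (y1 ⬝ᵥ Δ) + t ^ 2 * Cc := by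
          rw [hquad, hquad]
          have hdot : y1 ⬝ᵥ Δ = ∑ ij, e ij * projK a ij * Δ ij := by
            simp only [dotProduct]
            exact Finset.sum_congr rfl fun ij _ => by rw [hy1e]
          rw [hdot, hCc, Finset.mul_sum, Finset.mul_sum, Finset.mul_sum, Finset.mul_sum,
            ← Finset.sum_add_distrib, ← Finset.sum_add_distrib]
          exact Finset.sum_le_sum fun ij _ => by
            have := hcomp ij; nlinarith
        have hmin := hx1min xt hxtX
        have hdotsub : y1 ⬝ᵥ Δ = y1 ⬝ᵥ tg w - y1 ⬝ᵥ tg x1 := by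
          rw [hΔ, dotProduct_sub]
        have hstep : t * F x1 ≤ t * (F w + (y1 ⬝ᵥ tg w - y1 ⬝ᵥ tg x1) + t * Cc) := by
          rw [← hdotsub]
          nlinarith [hmin, hFt, hsum]
        have := (mul_le_mul_iff_right₀ ht).mp hstep
        linarith
      by_contra hcon
      push_neg at hcon
      set ε : ℝ := F x1 + y1 ⬝ᵥ tg x1 - (F w + y1 ⬝ᵥ tg w) with hε
      have hεpos : 0 < ε := by simp only [hε]; linarith
      set t : ℝ := min 1 (ε / (2 * (Cc + 1))) with htdef
      have ht0 : 0 < t := lt_min one_pos (by positivity)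
      have ht1 : t ≤ 1 := min_le_left _ _
      have htC : t * Cc < ε := by
        have h1 : t ≤ ε / (2 * (Cc + 1)) := min_le_right _ _
        have h2 : t * Cc ≤ (ε / (2 * (Cc + 1))) * Cc :=
          mul_le_mul_of_nonneg_right h1 hCcnn
        have h3 : (ε / (2 * (Cc + 1))) * Cc < ε := by
          rw [div_mul_eq_mul_div, div_lt_iff₀ (by positivity)]
          nlinarith
        linarith
      have := main t ht0 ht1
      simp only [hε] at htC
      linarith
    · -- (ii) membership in K
      intro i j
      exact le_max_right _ _
    · -- (iii) normal cone condition
      intro u hu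
      rw [dotProduct]
      apply Finset.sum_nonpos
      rintro ⟨i, j | j⟩ -
      · show min (a (i, Sum.inl j)) 0 * ((u - y1) (i, Sum.inl j)) ≤ 0
        rcases le_or_gt 0 (a (i, Sum.inl j)) with h | h
        · rw [min_eq_right h, zero_mul]
        · have hm : y1 (i, Sum.inl j) = 0 := by
            show max ((D⁻¹ *ᵥ a) (i, Sum.inl j)) 0 = 0
            rw [hmul]
            exact max_eq_right (mul_nonpos_of_nonneg_of_nonpos (hepos _).le h.le)
          rw [min_eq_left h.le, Pi.sub_apply, hm, sub_zero]
          exact mul_nonpos_of_nonpos_of_nonneg h.le (hu i j)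
      · show (0:ℝ) * ((u - y1) (i, Sum.inr j)) ≤ 0
        rw [zero_mul]
    · -- (iv) the decomposition identity
      funext ij
      rcases ij with ⟨i, j | j⟩
      · show max ((D⁻¹ *ᵥ a) (i, Sum.inl j)) 0 = _
        rw [hmul, hmul]
        have : (a + -projKpolar a) (i, Sum.inl j)
            = a (i, Sum.inl j) - min (a (i, Sum.inl j)) 0 := by
          simp only [Pi.add_apply, Pi.neg_apply]
          show a (i, Sum.inl j) + -min (a (i, Sum.inl j)) 0 = _
          ring
        rw [this]
        have h2 : a (i, Sum.inl j) - min (a (i, Sum.inl j)) 0 = max (a (i, Sum.inl j)) 0 := by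
          rcases le_total (a (i, Sum.inl j)) 0 with h | h
          · rw [min_eq_left h, max_eq_right h]; ring
          · rw [min_eq_right h, max_eq_left h]; ring
        rw [h2, mul_max_of_nonneg _ _ (hepos (i, Sum.inl j)).le, mul_zero]
      · show (D⁻¹ *ᵥ a) (i, Sum.inr j) = _
        rw [hmul, hmul]
        have : (a + -projKpolar a) (i, Sum.inr j) = a (i, Sum.inr j) := by
          simp only [Pi.add_apply, Pi.neg_apply]
          show a (i, Sum.inr j) + -(0:ℝ) = _
          ring
        rw [this]
  -- key2 : existence of a minimizer
  have key2 : ∃ x1 : ∀ i, Fin (d i) → ℝ, (∀ i, x1 i ∈ X i) ∧ ∀ w, (∀ i, w i ∈ X i) →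
      F x1 + (1 / 2) * quadForm D⁻¹ (projK (qv + tg x1))
        ≤ F w + (1 / 2) * quadForm D⁻¹ (projK (qv + tg w)) := by
    have hcf : ∀ i, Continuous (f i) := fun i => by
      rw [← continuousOn_univ]
      exact (hf i).continuousOn isOpen_univ
    have hcg : ∀ i j, Continuous (fun xi => g i xi j) := fun i j => by
      rw [← continuousOn_univ]
      exact (hg i j).continuousOn isOpen_univ
    have hctg : Continuous tg := by
      apply continuous_pi
      rintro ⟨i, j | j⟩
      · have : (fun x : ∀ i, Fin (d i) → ℝ => tg x (i, Sum.inl j))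
            = fun x => g i (x i) j := funext fun x => htg1 x i j
        rw [this]
        exact (hcg i j).comp (continuous_apply i)
      · have : (fun x : ∀ i, Fin (d i) → ℝ => tg x (i, Sum.inr j))
            = fun x => (∑ k, B i j k * x i k) + c i j := by
          funext x
          rw [htg2 x i j]
          simp [Matrix.mulVec, dotProduct]
        rw [this]
        exact ((continuous_finset_sum _ fun k _ =>
          (continuous_const.mul ((continuous_apply k).comp (continuous_apply i))))).add
          continuous_const
    have hcF : Continuous F := by
      have : F = fun x => ∑ i, f i (x i) := funext hF
      rw [this]
      exact continuous_finset_sum _ fun i _ => (hcf i).comp (continuous_apply i)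
    have hcproj : Continuous (projK (N := N) (m := m) (p := p)) := by
      apply continuous_pi
      rintro ⟨i, j | j⟩
      · exact ((continuous_apply _).max continuous_const)
      · exact continuous_apply _
    have hcquad : Continuous (quadForm D⁻¹) := by
      unfold quadForm
      simp only [dotProduct, Matrix.mulVec]
      exact continuous_finset_sum _ fun ij _ => (continuous_apply ij).mul
        (continuous_finset_sum _ fun kl _ => continuous_const.mul (continuous_apply kl))
    have hΨ : Continuous (fun x => F x + (1 / 2) * quadForm D⁻¹ (projK (qv + tg x))) :=
      hcF.add (continuous_const.mul (hcquad.comp (hcproj.comp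
        (continuous_const.add hctg))))
    have hS : IsCompact (Set.univ.pi X) := isCompact_univ_pi hXcp
    have hSne : (Set.univ.pi X).Nonempty :=
      ⟨fun i => (hXne i).some, fun i _ => (hXne i).some_mem⟩
    obtain ⟨x1, hx1S, hmin⟩ := hS.exists_isMinOn hSne hΨ.continuousOn
    exact ⟨x1, fun i => hx1S i (Set.mem_univ i), fun w hw => hmin (by intro i _; exact hw i)⟩
  refine ⟨?_, key2, key3⟩
  obtain ⟨x1, hx1X, hx1min⟩ := key2
  obtain ⟨h1, h2, h3, h4⟩ := key3 x1 ⟨hx1X, hx1min⟩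
  refine ⟨projK (D⁻¹ *ᵥ (qv + tg x1)), x1, -projKpolar (qv + tg x1),
    hx1X, h1, h2, ?_, ?_⟩
  · intro u hu
    rw [neg_neg]
    exact h3 u hu
  · exact h4
end

section
/- (Proposition, part 3: ergodic constraint violation bounded by dual iterates) Suppose the problem setup holds and the iterate hypotheses hold, and let x̄^k := (1/k)Σ_{l=1}^k x^l with blocks x̄_i^k. Then for every k ≥ 1, the Euclidean norm of the vector ( [Σ_{i=1}^N g_i(x̄_i^k)]_+ , Σ_{i=1}^N h_i(x̄_i^k) ) ∈ ℝ^{m+p} is at most (√(N·λ_1(P_A))/k)·‖y^k − y^0‖_A, where [w]_+ denotes the componentwise maximum of w with 0. -/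
open Matrix
open scoped Kronecker

/-- Rayleigh quotient bound from an upper bound on eigenvalues. -/
lemma aux_rayleigh {N : ℕ} {M : Matrix (Fin N) (Fin N) ℝ} (hM : M.IsHermitian) (lam1 : ℝ)
    (hmax : ∀ (μ : ℝ) (v : Fin N → ℝ), v ≠ 0 → M *ᵥ v = μ • v → μ ≤ lam1)
    (v : Fin N → ℝ) : v ⬝ᵥ (M *ᵥ v) ≤ lam1 * (v ⬝ᵥ v) := by
  classical
  set U : Matrix (Fin N) (Fin N) ℝ := (hM.eigenvectorUnitary : Matrix (Fin N) (Fin N) ℝ) with hUdef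
  have hUstar : star U = Uᵀ := by
    rw [Matrix.star_eq_conjTranspose, Matrix.conjTranspose_eq_transpose_of_trivial]
  have hUU : U * Uᵀ = 1 := by
    have h := Matrix.mem_unitaryGroup_iff.mp (hM.eigenvectorUnitary).2
    rwa [hUstar] at h
  have heig : ∀ i, hM.eigenvalues i ≤ lam1 := by
    intro i
    refine hmax _ _ ?_ (hM.mulVec_eigenvectorBasis i)
    intro h
    refine hM.eigenvectorBasis.orthonormal.ne_zero i ?_
    ext t
    exact congrFun h t
  have hofr : (RCLike.ofReal ∘ hM.eigenvalues : Fin N → ℝ) = hM.eigenvalues := by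
    funext i; simp
  have hspec : M = U * Matrix.diagonal hM.eigenvalues * Uᵀ := by
    have h := hM.spectral_theorem
    rw [Unitary.conjStarAlgAut_apply, hofr, ← hUdef, hUstar] at h
    exact h
  have hvm : ∀ (u1 u2 : Fin N → ℝ), u1 ⬝ᵥ (U *ᵥ u2) = (Uᵀ *ᵥ u1) ⬝ᵥ u2 := by
    intro u1 u2
    rw [Matrix.dotProduct_mulVec]
    congr 1
    rw [← Matrix.transpose_transpose U, Matrix.vecMul_transpose, Matrix.transpose_transpose]
  set u : Fin N → ℝ := Uᵀ *ᵥ v with hu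
  have h1 : v ⬝ᵥ (M *ᵥ v) = u ⬝ᵥ (Matrix.diagonal hM.eigenvalues *ᵥ u) := by
    conv_lhs => rw [hspec]
    rw [← Matrix.mulVec_mulVec, ← Matrix.mulVec_mulVec, hvm, Matrix.mulVec_mulVec]
  have h4 : u ⬝ᵥ u = v ⬝ᵥ v := by
    rw [hu]
    rw [Matrix.dotProduct_mulVec (Uᵀ *ᵥ v) Uᵀ v, Matrix.vecMul_transpose,
      Matrix.mulVec_mulVec, hUU, Matrix.one_mulVec]
  have h2 : u ⬝ᵥ (Matrix.diagonal hM.eigenvalues *ᵥ u) ≤ lam1 * (u ⬝ᵥ u) := by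
    rw [dotProduct, dotProduct, Finset.mul_sum]
    refine Finset.sum_le_sum fun i _ => ?_
    rw [Matrix.mulVec_diagonal]
    have : u i * (hM.eigenvalues i * u i) = hM.eigenvalues i * (u i * u i) := by ring
    rw [this]
    exact mul_le_mul_of_nonneg_right (heig i) (mul_self_nonneg _)
  rw [h1, ← h4]
  exact h2

theorem stmt8
    (N m p : ℕ) (hN : 1 ≤ N) (hm : 1 ≤ m) (hp : 1 ≤ p)
    (d : Fin N → ℕ)
    (X : ∀ i : Fin N, Set (Fin (d i) → ℝ))
    (hXne : ∀ i, (X i).Nonempty) (hXcl : ∀ i, IsClosed (X i))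
    (hXcv : ∀ i, Convex ℝ (X i))
    (f : ∀ i : Fin N, (Fin (d i) → ℝ) → ℝ)
    (hf : ∀ i, ConvexOn ℝ Set.univ (f i))
    (g : ∀ i : Fin N, (Fin (d i) → ℝ) → Fin m → ℝ)
    (hg : ∀ i j, ConvexOn ℝ Set.univ (fun xi => g i xi j))
    (B : ∀ i : Fin N, Matrix (Fin p) (Fin (d i)) ℝ) (c : ∀ i : Fin N, Fin p → ℝ)
    (F : (∀ i, Fin (d i) → ℝ) → ℝ) (hF : ∀ x, F x = ∑ i, f i (x i))
    (tg : (∀ i, Fin (d i) → ℝ) → Idx N m p → ℝ)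
    (htg1 : ∀ x (i : Fin N) (j : Fin m), tg x (i, Sum.inl j) = g i (x i) j)
    (htg2 : ∀ x (i : Fin N) (j : Fin p), tg x (i, Sum.inr j) = (B i *ᵥ x i + c i) j)
    (ρ : ℝ) (hρ : 0 < ρ)
    (PA PH PHt : Matrix (Fin N) (Fin N) ℝ)
    (hPA : PA.PosSemidef) (hPH : PH.PosSemidef) (hPHt : PHt.PosSemidef)
    (hDdiag : (PA + ρ • PH).IsDiag) (hDpd : (PA + ρ • PH).PosDef)
    (hHHt : (PH - PHt).PosSemidef)
    (hPHnull : ∀ v : Fin N → ℝ, PH *ᵥ v = 0 ↔ ∃ t : ℝ, v = fun _ => t)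
    (hPHtnull : ∀ v : Fin N → ℝ, PHt *ᵥ v = 0 ↔ ∃ t : ℝ, v = fun _ => t)
    (A Htld D : Matrix (Idx N m p) (Idx N m p) ℝ)
    (hA : A = PA ⊗ₖ (1 : Matrix (Blk m p) (Blk m p) ℝ))
    (hHtld : Htld = PHt ⊗ₖ (1 : Matrix (Blk m p) (Blk m p) ℝ))
    (hD : D = A + ρ • (PH ⊗ₖ (1 : Matrix (Blk m p) (Blk m p) ℝ)))
    (Hhalf : Matrix (Idx N m p) (Idx N m p) ℝ)
    (hHhalfpsd : Hhalf.PosSemidef) (hHhalfsq : Hhalf * Hhalf = Htld)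
    (lam1 : ℝ)
    (hlam1ev : ∃ v : Fin N → ℝ, v ≠ 0 ∧ PA *ᵥ v = lam1 • v)
    (hlam1max : ∀ (μ : ℝ) (v : Fin N → ℝ), v ≠ 0 → PA *ᵥ v = μ • v → μ ≤ lam1)
    (x : ℕ → ∀ i, Fin (d i) → ℝ) (y z : ℕ → Idx N m p → ℝ)
    (hxX : ∀ k, ∀ i, x (k + 1) i ∈ X i)
    (hy0 : memK (y 0))
    (hyupd : ∀ k, y (k + 1) = projK (D⁻¹ *ᵥ ((A *ᵥ y k) - (Hhalf *ᵥ z k) + tg (x (k + 1)))))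
    (hzupd : ∀ k, z (k + 1) = z k + ρ • (Hhalf *ᵥ y (k + 1)))
    (xbar : ℕ → ∀ i, Fin (d i) → ℝ)
    (hxbar : ∀ k (i : Fin N) (j : Fin (d i)),
      xbar k i j = (∑ l ∈ Finset.Icc 1 k, x l i j) / (k : ℝ))
    :
    ∀ k : ℕ, 1 ≤ k →
      Real.sqrt ((∑ j : Fin m, (max (∑ i, g i (xbar k i) j) 0) ^ 2)
          + ∑ j : Fin p, (∑ i, (B i *ᵥ xbar k i + c i) j) ^ 2)
        ≤ Real.sqrt ((N : ℝ) * lam1) / (k : ℝ) * Real.sqrt (quadForm A (y k - y 0)) := by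
  classical
  intro k hk
  have hkpos : (0:ℝ) < (k:ℝ) := by exact_mod_cast hk
  have hkne : (k:ℝ) ≠ 0 := hkpos.ne'
  -- reindexing of averages
  have hreidx : ∀ (F : ℕ → ℝ), ∑ l ∈ Finset.Icc 1 k, F l = ∑ l ∈ Finset.range k, F (l+1) := by
    intro F
    rw [← Finset.Ico_add_one_right_eq_Icc, Finset.sum_Ico_eq_sum_range]
    refine Finset.sum_congr rfl fun l _ => by rw [Nat.add_comm]
  -- the average as a convex combination
  have hxbcomb : ∀ i : Fin N, xbar k i = ∑ l ∈ Finset.range k, ((k:ℝ)⁻¹) • x (l+1) i := by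
    intro i
    funext jj
    rw [hxbar k i jj, hreidx (fun l => x l i jj), Finset.sum_apply]
    simp only [Pi.smul_apply, smul_eq_mul, inv_mul_eq_div]
    rw [← Finset.sum_div]
  -- nonnegativity of lam1
  have hlam1nonneg : 0 ≤ lam1 := by
    obtain ⟨v, hvne, hev⟩ := hlam1ev
    have h1 : 0 ≤ v ⬝ᵥ (PA *ᵥ v) := by
      have := hPA.dotProduct_mulVec_nonneg v
      simpa using this
    rw [hev] at h1
    have h2 : v ⬝ᵥ (lam1 • v) = lam1 * (v ⬝ᵥ v) := by
      simp [dotProduct, Finset.mul_sum, mul_comm, mul_assoc, mul_left_comm]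
    rw [h2] at h1
    have h3 : 0 < v ⬝ᵥ v := by
      rcases lt_or_eq_of_le (Finset.sum_nonneg fun i _ => mul_self_nonneg (v i)) with h | h
      · exact h
      · exact absurd (dotProduct_self_eq_zero.mp h.symm) hvne
    nlinarith
  -- diagonal structure of D
  have hPHsym : PHᵀ = PH := by
    rw [← Matrix.conjTranspose_eq_transpose_of_trivial]; exact hPH.1
  have hHhalfsym : Hhalfᵀ = Hhalf := by
    rw [← Matrix.conjTranspose_eq_transpose_of_trivial]; exact hHhalfpsd.1
  set dv : Idx N m p → ℝ := fun c => (PA + ρ • PH) c.1 c.1 with hdvdef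
  have hdvpos : ∀ c, 0 < dv c := by
    intro c
    have hne : (Pi.single c.1 1 : Fin N → ℝ) ≠ 0 := by
      intro h0
      have := congrFun h0 c.1
      simp at this
    have h := hDpd.dotProduct_mulVec_pos hne
    have hcomp : star (Pi.single c.1 (1:ℝ)) ⬝ᵥ ((PA + ρ • PH) *ᵥ Pi.single c.1 1)
        = (PA + ρ • PH) c.1 c.1 := by
      simp [dotProduct, Matrix.mulVec, Pi.single_apply, mul_ite, ite_mul,
        Finset.sum_ite_eq, Finset.sum_ite_eq']
    rw [hcomp] at h
    exact h
  have hDdiagonal : D = Matrix.diagonal dv := by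
    ext ⟨i, j⟩ ⟨i', j'⟩
    simp only [hD, hA, Matrix.add_apply, Matrix.smul_apply, Matrix.kroneckerMap_apply,
      smul_eq_mul, Matrix.diagonal_apply]
    have hkey : PA i i' * (1 : Matrix (Blk m p) (Blk m p) ℝ) j j'
        + ρ * (PH i i' * (1 : Matrix (Blk m p) (Blk m p) ℝ) j j')
        = (PA i i' + ρ * PH i i') * (1 : Matrix (Blk m p) (Blk m p) ℝ) j j' := by ring
    rw [hkey]
    by_cases hii : i = i'
    · subst hii
      by_cases hjj : j = j'
      · subst hjj
        simp [Matrix.one_apply_eq, hdvdef, Matrix.add_apply, Matrix.smul_apply]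
      · have : ((i, j) : Idx N m p) ≠ (i, j') := by
          simp [Prod.ext_iff, hjj]
        simp [Matrix.one_apply_ne hjj, this]
    · have h0 : PA i i' + ρ * PH i i' = 0 := by
        have := hDdiag (show i ≠ i' from hii)
        simpa [Matrix.add_apply, Matrix.smul_apply] using this
      have : ((i, j) : Idx N m p) ≠ (i', j') := by
        simp [Prod.ext_iff, hii]
      simp [h0, this]
  have hDinv : D⁻¹ = Matrix.diagonal (fun c => (dv c)⁻¹) := by
    rw [hDdiagonal]
    apply Matrix.inv_eq_right_inv
    rw [Matrix.diagonal_mul_diagonal]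
    have hfun : (fun i => dv i * (dv i)⁻¹) = fun _ => (1:ℝ) := by
      funext cc
      exact mul_inv_cancel₀ (hdvpos cc).ne'
    rw [hfun, Matrix.diagonal_one]
  have hDmul : ∀ (v : Idx N m p → ℝ) (cc : Idx N m p), (D *ᵥ v) cc = dv cc * v cc := by
    intro v cc
    rw [hDdiagonal, Matrix.mulVec_diagonal]
  have hDinvmul : ∀ (v : Idx N m p → ℝ) (cc : Idx N m p), (D⁻¹ *ᵥ v) cc = (dv cc)⁻¹ * v cc := by
    intro v cc
    rw [hDinv, Matrix.mulVec_diagonal]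
  -- per-step componentwise bounds
  have hstep : ∀ (l : ℕ) (cc : Idx N m p),
      tg (x (l+1)) cc ≤ (D *ᵥ y (l+1)) cc - (A *ᵥ y l) cc + (Hhalf *ᵥ z l) cc := by
    intro l cc
    have hu : tg (x (l+1)) cc
        = ((A *ᵥ y l) - (Hhalf *ᵥ z l) + tg (x (l+1))) cc - (A *ᵥ y l) cc
          + (Hhalf *ᵥ z l) cc := by
      have h0 : ((A *ᵥ y l) - (Hhalf *ᵥ z l) + tg (x (l+1))) cc
          = (A *ᵥ y l) cc - (Hhalf *ᵥ z l) cc + tg (x (l+1)) cc := rfl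
      rw [h0]; ring
    rw [hu]
    have hkey : ((A *ᵥ y l) - (Hhalf *ᵥ z l) + tg (x (l+1))) cc ≤ (D *ᵥ y (l+1)) cc := by
      set uv : Idx N m p → ℝ := (A *ᵥ y l) - (Hhalf *ᵥ z l) + tg (x (l+1)) with huv
      have hycc : ∀ c', y (l+1) c' = projK (D⁻¹ *ᵥ uv) c' := by
        intro c'
        rw [huv]
        exact congrFun (hyupd l) c'
      have hDy : (D *ᵥ y (l+1)) cc = dv cc * projK (D⁻¹ *ᵥ uv) cc := by
        rw [hDmul, hycc cc]
      have hDinvapp : ∀ c', (D⁻¹ *ᵥ uv) c' = (dv c')⁻¹ * uv c' := fun c' => hDinvmul uv c'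
      rw [hDy]
      obtain ⟨i, j | j⟩ := cc
      · show uv (i, Sum.inl j) ≤ dv (i, Sum.inl j) * max ((D⁻¹ *ᵥ uv) (i, Sum.inl j)) 0
        rw [hDinvapp, mul_max_of_nonneg _ _ (hdvpos (i, Sum.inl j)).le, mul_zero,
          ← mul_assoc, mul_inv_cancel₀ (hdvpos (i, Sum.inl j)).ne', one_mul]
        exact le_max_left _ _
      · show uv (i, Sum.inr j) ≤ dv (i, Sum.inr j) * (D⁻¹ *ᵥ uv) (i, Sum.inr j)
        rw [hDinvapp, ← mul_assoc, mul_inv_cancel₀ (hdvpos (i, Sum.inr j)).ne', one_mul]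
    linarith
  have hstepEq : ∀ (l : ℕ) (i : Fin N) (j : Fin p),
      tg (x (l+1)) (i, Sum.inr j)
        = (D *ᵥ y (l+1)) (i, Sum.inr j) - (A *ᵥ y l) (i, Sum.inr j)
          + (Hhalf *ᵥ z l) (i, Sum.inr j) := by
    intro l i j
    set uv : Idx N m p → ℝ := (A *ᵥ y l) - (Hhalf *ᵥ z l) + tg (x (l+1)) with huv
    have hycc : y (l+1) (i, Sum.inr j) = projK (D⁻¹ *ᵥ uv) (i, Sum.inr j) := by
      rw [huv]
      exact congrFun (hyupd l) (i, Sum.inr j)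
    have hDy : (D *ᵥ y (l+1)) (i, Sum.inr j) = dv (i, Sum.inr j) * projK (D⁻¹ *ᵥ uv) (i, Sum.inr j) := by
      rw [hDmul, hycc]
    have hDinvapp : (D⁻¹ *ᵥ uv) (i, Sum.inr j) = (dv (i, Sum.inr j))⁻¹ * uv (i, Sum.inr j) :=
      hDinvmul uv (i, Sum.inr j)
    have hproj : projK (D⁻¹ *ᵥ uv) (i, Sum.inr j) = (D⁻¹ *ᵥ uv) (i, Sum.inr j) := rfl
    have hDyv : (D *ᵥ y (l+1)) (i, Sum.inr j) = uv (i, Sum.inr j) := by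
      rw [hDy, hproj, hDinvapp, ← mul_assoc, mul_inv_cancel₀ (hdvpos (i, Sum.inr j)).ne', one_mul]
    have huvapp : uv (i, Sum.inr j)
        = (A *ᵥ y l) (i, Sum.inr j) - (Hhalf *ᵥ z l) (i, Sum.inr j) + tg (x (l+1)) (i, Sum.inr j) := by
      simp [huv, Pi.add_apply, Pi.sub_apply]
    rw [hDyv, huvapp]
    ring
  -- column sums annihilate symmetric matrices with constant-block kernels
  have hcolsum_dot : ∀ (j : Blk m p) (v : Idx N m p → ℝ),
      (fun c : Idx N m p => if c.2 = j then (1:ℝ) else 0) ⬝ᵥ v = ∑ i, v (i, j) := by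
    intro j v
    rw [dotProduct, Fintype.sum_prod_type]
    refine Finset.sum_congr rfl fun i _ => ?_
    simp [ite_mul, Finset.sum_ite_eq']
  have colzero : ∀ (M : Matrix (Idx N m p) (Idx N m p) ℝ), Mᵀ = M →
      (∀ j : Blk m p, M *ᵥ (fun c : Idx N m p => if c.2 = j then (1:ℝ) else 0) = 0) →
      ∀ (j : Blk m p) (v : Idx N m p → ℝ), ∑ i, (M *ᵥ v) (i, j) = 0 := by
    intro M hsym h0 j v
    rw [← hcolsum_dot j (M *ᵥ v), Matrix.dotProduct_mulVec]
    have hvm : (fun c : Idx N m p => if c.2 = j then (1:ℝ) else 0) ᵥ* M = 0 := by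
      conv_lhs => rw [← hsym]
      rw [Matrix.vecMul_transpose, h0 j]
    rw [hvm, zero_dotProduct]
  have hPH1 : PH *ᵥ (fun _ => (1:ℝ)) = 0 := (hPHnull _).mpr ⟨1, rfl⟩
  have hPHt1 : PHt *ᵥ (fun _ => (1:ℝ)) = 0 := (hPHtnull _).mpr ⟨1, rfl⟩
  have hkron_ind : ∀ (P : Matrix (Fin N) (Fin N) ℝ), (P *ᵥ (fun _ => (1:ℝ)) = 0) →
      ∀ j : Blk m p,
        (P ⊗ₖ (1 : Matrix (Blk m p) (Blk m p) ℝ)) *ᵥ (fun c : Idx N m p => if c.2 = j then (1:ℝ) else 0) = 0 := by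
    intro P hP1 j
    funext c
    obtain ⟨i, j'⟩ := c
    have hrow : ∀ i0 : Fin N, ∑ i'' , P i0 i'' = 0 := by
      intro i0
      have := congrFun hP1 i0
      simpa [Matrix.mulVec, dotProduct] using this
    show ∑ c' : Idx N m p, (P ⊗ₖ (1 : Matrix (Blk m p) (Blk m p) ℝ)) (i, j') c'
        * (if c'.2 = j then (1:ℝ) else 0) = 0
    rw [Fintype.sum_prod_type]
    have : ∀ i'' : Fin N, ∑ j'' : Blk m p, (P ⊗ₖ (1 : Matrix (Blk m p) (Blk m p) ℝ)) (i, j') (i'', j'')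
        * (if j'' = j then (1:ℝ) else 0) = P i i'' * (1 : Matrix (Blk m p) (Blk m p) ℝ) j' j := by
      intro i''
      simp [Matrix.kroneckerMap_apply, mul_ite, Finset.sum_ite_eq']
    simp only [this]
    rw [← Finset.sum_mul, hrow i, zero_mul]
  have hkronsym : ∀ (P : Matrix (Fin N) (Fin N) ℝ), Pᵀ = P →
      (P ⊗ₖ (1 : Matrix (Blk m p) (Blk m p) ℝ))ᵀ = P ⊗ₖ (1 : Matrix (Blk m p) (Blk m p) ℝ) := by
    intro P hPsym
    ext ⟨i, j⟩ ⟨i', j'⟩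
    have h1 : P i' i = P i i' := by
      conv_lhs => rw [← hPsym]
      rfl
    simp [Matrix.transpose_apply, Matrix.kroneckerMap_apply, h1, Matrix.one_apply, eq_comm]
  -- column sums of Hhalf vanish
  have hHtld0 : ∀ j : Blk m p,
      Htld *ᵥ (fun c : Idx N m p => if c.2 = j then (1:ℝ) else 0) = 0 := by
    intro j
    rw [hHtld]
    exact hkron_ind PHt hPHt1 j
  have hHhalf0 : ∀ j : Blk m p,
      Hhalf *ᵥ (fun c : Idx N m p => if c.2 = j then (1:ℝ) else 0) = 0 := by
    intro j
    set uj : Idx N m p → ℝ := fun c => if c.2 = j then (1:ℝ) else 0 with hujdef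
    have hsq : (Hhalf *ᵥ uj) ⬝ᵥ (Hhalf *ᵥ uj) = 0 := by
      rw [Matrix.dotProduct_mulVec]
      have : (Hhalf *ᵥ uj) ᵥ* Hhalf = Htld *ᵥ uj := by
        rw [← Matrix.mulVec_transpose, hHhalfsym, Matrix.mulVec_mulVec, hHhalfsq]
      rw [this, hHtld0 j, zero_dotProduct]
    exact dotProduct_self_eq_zero.mp hsq
  have hHcol : ∀ (j : Blk m p) (v : Idx N m p → ℝ), ∑ i, (Hhalf *ᵥ v) (i, j) = 0 :=
    colzero Hhalf hHhalfsym hHhalf0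
  have hPHcol : ∀ (j : Blk m p) (v : Idx N m p → ℝ),
      ∑ i, ((PH ⊗ₖ (1 : Matrix (Blk m p) (Blk m p) ℝ)) *ᵥ v) (i, j) = 0 :=
    colzero _ (hkronsym PH hPHsym) (hkron_ind PH hPH1)
  have hDcol : ∀ (j : Blk m p) (v : Idx N m p → ℝ),
      ∑ i, (D *ᵥ v) (i, j) = ∑ i, (A *ᵥ v) (i, j) := by
    intro j v
    have hDv : D *ᵥ v = A *ᵥ v + ρ • ((PH ⊗ₖ (1 : Matrix (Blk m p) (Blk m p) ℝ)) *ᵥ v) := by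
      rw [hD, Matrix.add_mulVec, Matrix.smul_mulVec]
    rw [hDv]
    simp only [Pi.add_apply, Pi.smul_apply, smul_eq_mul]
    rw [Finset.sum_add_distrib, ← Finset.mul_sum, hPHcol j v, mul_zero, add_zero]
  -- per-step column bounds
  have hcolstep : ∀ (l : ℕ) (j : Fin m),
      ∑ i, g i (x (l+1) i) j
        ≤ (∑ i, (A *ᵥ y (l+1)) (i, Sum.inl j)) - ∑ i, (A *ᵥ y l) (i, Sum.inl j) := by
    intro l j
    have h1 : ∑ i, g i (x (l+1) i) j = ∑ i, tg (x (l+1)) (i, Sum.inl j) :=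
      Finset.sum_congr rfl fun i _ => (htg1 (x (l+1)) i j).symm
    have h2 : ∑ i, tg (x (l+1)) (i, Sum.inl j)
        ≤ ∑ i, ((D *ᵥ y (l+1)) (i, Sum.inl j) - (A *ᵥ y l) (i, Sum.inl j)
            + (Hhalf *ᵥ z l) (i, Sum.inl j)) :=
      Finset.sum_le_sum fun i _ => hstep l (i, Sum.inl j)
    rw [h1]
    refine h2.trans (le_of_eq ?_)
    rw [Finset.sum_add_distrib, Finset.sum_sub_distrib, hHcol, hDcol, add_zero]
  have hcolstepEq : ∀ (l : ℕ) (j : Fin p),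
      ∑ i, (B i *ᵥ x (l+1) i + c i) j
        = (∑ i, (A *ᵥ y (l+1)) (i, Sum.inr j)) - ∑ i, (A *ᵥ y l) (i, Sum.inr j) := by
    intro l j
    have h1 : ∑ i, (B i *ᵥ x (l+1) i + c i) j = ∑ i, tg (x (l+1)) (i, Sum.inr j) :=
      Finset.sum_congr rfl fun i _ => (htg2 (x (l+1)) i j).symm
    have h2 : ∑ i, tg (x (l+1)) (i, Sum.inr j)
        = ∑ i, ((D *ᵥ y (l+1)) (i, Sum.inr j) - (A *ᵥ y l) (i, Sum.inr j)
            + (Hhalf *ᵥ z l) (i, Sum.inr j)) :=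
      Finset.sum_congr rfl fun i _ => hstepEq l i j
    rw [h1, h2, Finset.sum_add_distrib, Finset.sum_sub_distrib, hHcol, hDcol, add_zero]
  -- the difference vector
  set w : Idx N m p → ℝ := y k - y 0 with hwdef
  have haj : ∀ j : Blk m p,
      (∑ i, (A *ᵥ y k) (i, j)) - ∑ i, (A *ᵥ y 0) (i, j) = ∑ i, (A *ᵥ w) (i, j) := by
    intro j
    rw [hwdef, Matrix.mulVec_sub]
    rw [← Finset.sum_sub_distrib]
    rfl
  -- telescoping
  have htel_inl : ∀ j : Fin m,
      ∑ l ∈ Finset.range k, (∑ i, g i (x (l+1) i) j) ≤ ∑ i, (A *ᵥ w) (i, Sum.inl j) := by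
    intro j
    have h1 : ∑ l ∈ Finset.range k, (∑ i, g i (x (l+1) i) j)
        ≤ ∑ l ∈ Finset.range k,
            ((∑ i, (A *ᵥ y (l+1)) (i, Sum.inl j)) - ∑ i, (A *ᵥ y l) (i, Sum.inl j)) :=
      Finset.sum_le_sum fun l _ => hcolstep l j
    rw [Finset.sum_range_sub (fun l => ∑ i, (A *ᵥ y l) (i, Sum.inl j)) k] at h1
    rw [← haj]
    exact h1
  have htel_inr : ∀ j : Fin p,
      ∑ l ∈ Finset.range k, (∑ i, (B i *ᵥ x (l+1) i + c i) j) = ∑ i, (A *ᵥ w) (i, Sum.inr j) := by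
    intro j
    have h1 : ∑ l ∈ Finset.range k, (∑ i, (B i *ᵥ x (l+1) i + c i) j)
        = ∑ l ∈ Finset.range k,
            ((∑ i, (A *ᵥ y (l+1)) (i, Sum.inr j)) - ∑ i, (A *ᵥ y l) (i, Sum.inr j)) :=
      Finset.sum_congr rfl fun l _ => hcolstepEq l j
    rw [h1, Finset.sum_range_sub (fun l => ∑ i, (A *ᵥ y l) (i, Sum.inr j)) k, haj]
  -- Jensen for g
  have hjensen : ∀ (i : Fin N) (j : Fin m),
      g i (xbar k i) j ≤ (∑ l ∈ Finset.range k, g i (x (l+1) i) j) / k := by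
    intro i j
    have hwsum : ∑ _l ∈ Finset.range k, (k:ℝ)⁻¹ = 1 := by
      rw [Finset.sum_const, Finset.card_range, nsmul_eq_mul, mul_inv_cancel₀ hkne]
    have hjen := (hg i j).map_sum_le (t := Finset.range k) (w := fun _ => (k:ℝ)⁻¹)
      (p := fun l => x (l+1) i) (fun _ _ => by positivity) hwsum (fun _ _ => Set.mem_univ _)
    rw [← hxbcomb i] at hjen
    refine hjen.trans (le_of_eq ?_)
    simp only [smul_eq_mul, inv_mul_eq_div]
    rw [← Finset.sum_div]
  -- linearity for B
  have hlin : ∀ (i : Fin N) (j : Fin p),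
      (B i *ᵥ xbar k i + c i) j = (∑ l ∈ Finset.range k, (B i *ᵥ x (l+1) i + c i) j) / k := by
    intro i j
    have hB : B i *ᵥ xbar k i = ∑ l ∈ Finset.range k, ((k:ℝ)⁻¹) • (B i *ᵥ x (l+1) i) := by
      rw [hxbcomb i]
      rw [show (B i) *ᵥ (∑ l ∈ Finset.range k, ((k:ℝ)⁻¹) • x (l+1) i)
          = (B i).mulVecLin (∑ l ∈ Finset.range k, ((k:ℝ)⁻¹) • x (l+1) i) from rfl]
      rw [map_sum]
      exact Finset.sum_congr rfl fun l _ => by rw [_root_.map_smul]; rfl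
    rw [Pi.add_apply, hB, Finset.sum_apply]
    simp only [Pi.smul_apply, smul_eq_mul, inv_mul_eq_div, Pi.add_apply]
    rw [← Finset.sum_div, Finset.sum_add_distrib, Finset.sum_const, Finset.card_range,
      nsmul_eq_mul, add_div, mul_div_cancel_left₀ _ hkne]
  -- bounds on the averaged constraint values
  have hGb : ∀ j : Fin m,
      (∑ i, g i (xbar k i) j) ≤ (∑ i, (A *ᵥ w) (i, Sum.inl j)) / k := by
    intro j
    have h1 : (∑ i, g i (xbar k i) j)
        ≤ (∑ l ∈ Finset.range k, ∑ i, g i (x (l+1) i) j) / k := by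
      calc ∑ i, g i (xbar k i) j
          ≤ ∑ i, (∑ l ∈ Finset.range k, g i (x (l+1) i) j) / k :=
            Finset.sum_le_sum fun i _ => hjensen i j
        _ = (∑ l ∈ Finset.range k, ∑ i, g i (x (l+1) i) j) / k := by
            rw [← Finset.sum_div, Finset.sum_comm]
    refine h1.trans ?_
    gcongr
    exact htel_inl j
  have hHb : ∀ j : Fin p,
      (∑ i, (B i *ᵥ xbar k i + c i) j) = (∑ i, (A *ᵥ w) (i, Sum.inr j)) / k := by
    intro j
    have h1 : (∑ i, (B i *ᵥ xbar k i + c i) j)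
        = (∑ l ∈ Finset.range k, ∑ i, (B i *ᵥ x (l+1) i + c i) j) / k := by
      calc ∑ i, (B i *ᵥ xbar k i + c i) j
          = ∑ i, (∑ l ∈ Finset.range k, (B i *ᵥ x (l+1) i + c i) j) / k :=
            Finset.sum_congr rfl fun i _ => hlin i j
        _ = (∑ l ∈ Finset.range k, ∑ i, (B i *ᵥ x (l+1) i + c i) j) / k := by
            rw [← Finset.sum_div, Finset.sum_comm]
    rw [h1, htel_inr j]
  -- Cauchy-Schwarz per block
  have hAentry : ∀ (v : Idx N m p → ℝ) (i : Fin N) (j : Blk m p),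
      (A *ᵥ v) (i, j) = (PA *ᵥ (fun i' => v (i', j))) i := by
    intro v i j
    rw [hA]
    show ∑ c' : Idx N m p, (PA ⊗ₖ (1 : Matrix (Blk m p) (Blk m p) ℝ)) (i, j) c' * v c'
        = ∑ i', PA i i' * v (i', j)
    rw [Fintype.sum_prod_type]
    refine Finset.sum_congr rfl fun i' _ => ?_
    simp [Matrix.kroneckerMap_apply, Matrix.one_apply, mul_ite, ite_mul, mul_assoc,
      Finset.sum_ite_eq]
  obtain ⟨C, hC⟩ : ∃ C : Matrix (Fin N) (Fin N) ℝ, PA = Cᴴ * C := by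
    open scoped MatrixOrder in
    obtain ⟨C, hC⟩ := CStarAlgebra.nonneg_iff_eq_star_mul_self.mp hPA.nonneg
    exact ⟨C, hC⟩
  have hCT : PA = Cᵀ * C := by
    rw [hC, Matrix.conjTranspose_eq_transpose_of_trivial]
  have hCkey : ∀ (u1 u2 : Fin N → ℝ), u1 ⬝ᵥ (PA *ᵥ u2) = (C *ᵥ u1) ⬝ᵥ (C *ᵥ u2) := by
    intro u1 u2
    rw [hCT, ← Matrix.mulVec_mulVec, Matrix.dotProduct_mulVec, Matrix.vecMul_transpose]
  have hray := aux_rayleigh hPA.1 lam1 hlam1max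
  have h11 : (fun _ => (1:ℝ)) ⬝ᵥ (PA *ᵥ (fun _ => (1:ℝ))) ≤ lam1 * N := by
    have h := hray (fun _ => (1:ℝ))
    have hdot1 : dotProduct (fun _ : Fin N => (1:ℝ)) (fun _ => (1:ℝ)) = (N:ℝ) := by
      simp [dotProduct]
    rw [hdot1] at h
    exact h
  have hcs : ∀ j : Blk m p,
      (∑ i, (A *ᵥ w) (i, j)) ^ 2
        ≤ ((N:ℝ) * lam1) * ((fun i => w (i, j)) ⬝ᵥ (PA *ᵥ (fun i => w (i, j)))) := by
    intro j
    set v : Fin N → ℝ := fun i => w (i, j) with hvdef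
    have ha : ∑ i, (A *ᵥ w) (i, j) = (fun _ => (1:ℝ)) ⬝ᵥ (PA *ᵥ v) := by
      rw [dotProduct]
      refine Finset.sum_congr rfl fun i _ => ?_
      rw [hAentry w i j, one_mul]
    rw [ha, hCkey]
    have hCS := Finset.sum_mul_sq_le_sq_mul_sq Finset.univ (C *ᵥ (fun _ => (1:ℝ))) (C *ᵥ v)
    have hdot2 : (C *ᵥ (fun _ => (1:ℝ))) ⬝ᵥ (C *ᵥ v)
        = ∑ i, (C *ᵥ (fun _ => (1:ℝ))) i * (C *ᵥ v) i := rfl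
    have hsq1 : ∑ i, ((C *ᵥ (fun _ => (1:ℝ))) i) ^ 2
        = (fun _ => (1:ℝ)) ⬝ᵥ (PA *ᵥ (fun _ => (1:ℝ))) := by
      rw [hCkey]
      simp [dotProduct, sq]
    have hsq2 : ∑ i, ((C *ᵥ v) i) ^ 2 = v ⬝ᵥ (PA *ᵥ v) := by
      rw [hCkey]
      simp [dotProduct, sq]
    have hvPAv : 0 ≤ v ⬝ᵥ (PA *ᵥ v) := by
      rw [hCkey]
      exact Finset.sum_nonneg fun i _ => mul_self_nonneg _
    calc ((C *ᵥ (fun _ => (1:ℝ))) ⬝ᵥ (C *ᵥ v)) ^ 2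
        = (∑ i, (C *ᵥ (fun _ => (1:ℝ))) i * (C *ᵥ v) i) ^ 2 := by rw [hdot2]
      _ ≤ (∑ i, ((C *ᵥ (fun _ => (1:ℝ))) i) ^ 2) * ∑ i, ((C *ᵥ v) i) ^ 2 := hCS
      _ = ((fun _ => (1:ℝ)) ⬝ᵥ (PA *ᵥ (fun _ => (1:ℝ)))) * (v ⬝ᵥ (PA *ᵥ v)) := by
          rw [hsq1, hsq2]
      _ ≤ (lam1 * N) * (v ⬝ᵥ (PA *ᵥ v)) := mul_le_mul_of_nonneg_right h11 hvPAv
      _ = ((N:ℝ) * lam1) * (v ⬝ᵥ (PA *ᵥ v)) := by ring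
  -- decompose the quadratic form
  have hquad : quadForm A w = ∑ j : Blk m p, ((fun i => w (i, j)) ⬝ᵥ (PA *ᵥ (fun i => w (i, j)))) := by
    rw [quadForm, dotProduct, Fintype.sum_prod_type, Finset.sum_comm]
    refine Finset.sum_congr rfl fun j _ => ?_
    rw [dotProduct]
    refine Finset.sum_congr rfl fun i _ => ?_
    rw [hAentry w i j]
  have hquadnonneg : 0 ≤ quadForm A w := by
    rw [hquad]
    refine Finset.sum_nonneg fun j _ => ?_
    rw [hCkey]
    exact Finset.sum_nonneg fun i _ => mul_self_nonneg _
  -- assemble the main quadratic bound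
  have hmain : (∑ j : Fin m, (max (∑ i, g i (xbar k i) j) 0) ^ 2)
      + ∑ j : Fin p, (∑ i, (B i *ᵥ xbar k i + c i) j) ^ 2
      ≤ ((N:ℝ) * lam1) / (k:ℝ)^2 * quadForm A w := by
    have hterm1 : ∀ j : Fin m,
        (max (∑ i, g i (xbar k i) j) 0) ^ 2 ≤ (∑ i, (A *ᵥ w) (i, Sum.inl j)) ^ 2 / (k:ℝ)^2 := by
      intro j
      have h1 : max (∑ i, g i (xbar k i) j) 0 ≤ |(∑ i, (A *ᵥ w) (i, Sum.inl j)) / k| :=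
        max_le ((hGb j).trans (le_abs_self _)) (abs_nonneg _)
      have h2 : (max (∑ i, g i (xbar k i) j) 0) ^ 2 ≤ |(∑ i, (A *ᵥ w) (i, Sum.inl j)) / k| ^ 2 :=
        pow_le_pow_left₀ (le_max_right _ 0) h1 2
      rwa [sq_abs, div_pow] at h2
    have hterm2 : ∀ j : Fin p,
        (∑ i, (B i *ᵥ xbar k i + c i) j) ^ 2 = (∑ i, (A *ᵥ w) (i, Sum.inr j)) ^ 2 / (k:ℝ)^2 := by
      intro j
      rw [hHb j, div_pow]
    calc (∑ j : Fin m, (max (∑ i, g i (xbar k i) j) 0) ^ 2)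
          + ∑ j : Fin p, (∑ i, (B i *ᵥ xbar k i + c i) j) ^ 2
        ≤ (∑ j : Fin m, (∑ i, (A *ᵥ w) (i, Sum.inl j)) ^ 2 / (k:ℝ)^2)
          + ∑ j : Fin p, (∑ i, (A *ᵥ w) (i, Sum.inr j)) ^ 2 / (k:ℝ)^2 :=
          add_le_add (Finset.sum_le_sum fun j _ => hterm1 j)
            (le_of_eq (Finset.sum_congr rfl fun j _ => hterm2 j))
      _ = (∑ j : Blk m p, (∑ i, (A *ᵥ w) (i, j)) ^ 2) / (k:ℝ)^2 := by
          rw [Fintype.sum_sum_type (fun j : Blk m p => (∑ i, (A *ᵥ w) (i, j)) ^ 2), add_div,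
            Finset.sum_div, Finset.sum_div]
      _ ≤ (((N:ℝ) * lam1) * quadForm A w) / (k:ℝ)^2 := by
          gcongr ?_ / _
          rw [hquad, Finset.mul_sum]
          exact Finset.sum_le_sum fun j _ => hcs j
      _ = ((N:ℝ) * lam1) / (k:ℝ)^2 * quadForm A w := by ring
  -- finish with square roots
  have hNlamnonneg : 0 ≤ (N:ℝ) * lam1 := mul_nonneg (Nat.cast_nonneg N) hlam1nonneg
  have hsqrt := Real.sqrt_le_sqrt hmain
  refine hsqrt.trans (le_of_eq ?_)
  rw [Real.sqrt_mul (by positivity : (0:ℝ) ≤ ((N:ℝ) * lam1) / (k:ℝ)^2) (quadForm A w)]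
  congr 1
  rw [Real.sqrt_div hNlamnonneg, Real.sqrt_sq hkpos.le]
end

section
/- (Proposition, part 5: key dual inequality) Suppose the problem setup, the iterate hypotheses, and the saddle point hypotheses hold, and set v^k := H̃^{1/2}z^k, ŷ^k := D^{-1}(Ay^k − H̃^{1/2}z^k), v* := H̃^{1/2}z*. Then for every k ≥ 0: ⟨y^{k+1}, D(ŷ^k − y^{k+1}) + v*⟩ ≤ ½(‖y^k‖²_A − ‖y^{k+1}‖²_A) + (1/(2ρ))·( (v^k − v*)ᵀH̃†(v^k − v*) − (v^{k+1} − v*)ᵀH̃†(v^{k+1} − v*) ). -/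
open Matrix
open scoped Kronecker

section aux

variable {n : Type*} [Fintype n] [DecidableEq n]

lemma dotP_symm (M : Matrix n n ℝ) (x y : n → ℝ) :
    x ⬝ᵥ (M *ᵥ y) = (Mᵀ *ᵥ x) ⬝ᵥ y := by
  rw [dotProduct_mulVec, ← Matrix.mulVec_transpose]

lemma dotP_symm' (M : Matrix n n ℝ) (x y : n → ℝ) :
    (M *ᵥ x) ⬝ᵥ y = x ⬝ᵥ (Mᵀ *ᵥ y) := by
  rw [dotP_symm, Matrix.transpose_transpose]

lemma mpinv_unique {M X Y : Matrix n n ℝ} (hX : IsMPInv M X) (hY : IsMPInv M Y) : X = Y := by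
  obtain ⟨hX1, hX2, hX3, hX4⟩ := hX
  obtain ⟨hY1, hY2, hY3, hY4⟩ := hY
  have tX : Mᵀ * Xᵀ = X * M := by rw [← Matrix.transpose_mul, hX4]
  have tY : Mᵀ * Yᵀ = Y * M := by rw [← Matrix.transpose_mul, hY4]
  have tX2 : Xᵀ * Mᵀ = M * X := by rw [← Matrix.transpose_mul, hX3]
  have tY2 : Yᵀ * Mᵀ = M * Y := by rw [← Matrix.transpose_mul, hY3]
  have tM : Mᵀ = Mᵀ * Yᵀ * Mᵀ := by
    conv_lhs => rw [← hY1]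
    simp [Matrix.transpose_mul, Matrix.mul_assoc]
  have tM2 : Mᵀ = Mᵀ * Xᵀ * Mᵀ := by
    conv_lhs => rw [← hX1]
    simp [Matrix.transpose_mul, Matrix.mul_assoc]
  have hXM : X * M = (Y * M) * (X * M) := by
    calc X * M = Mᵀ * Xᵀ := tX.symm
    _ = (Mᵀ * Yᵀ * Mᵀ) * Xᵀ := by rw [← tM]
    _ = (Mᵀ * Yᵀ) * (Mᵀ * Xᵀ) := by simp only [Matrix.mul_assoc]
    _ = (Y * M) * (X * M) := by rw [tX, tY]
  have hMY : M * Y = (M * Y) * (M * X) := by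
    calc M * Y = Yᵀ * Mᵀ := tY2.symm
    _ = Yᵀ * (Mᵀ * Xᵀ * Mᵀ) := by rw [← tM2]
    _ = (Yᵀ * Mᵀ) * (Xᵀ * Mᵀ) := by simp only [Matrix.mul_assoc]
    _ = (M * Y) * (M * X) := by rw [tX2, tY2]
  have h1 : X = (Y * M) * X := by
    calc X = X * M * X := hX2.symm
    _ = ((Y * M) * (X * M)) * X := by rw [← hXM]
    _ = (Y * M) * (X * M * X) := by simp only [Matrix.mul_assoc]
    _ = (Y * M) * X := by rw [hX2]
  have h2 : Y = (Y * M) * X := by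
    calc Y = Y * M * Y := hY2.symm
    _ = Y * (M * Y) := by rw [Matrix.mul_assoc]
    _ = Y * ((M * Y) * (M * X)) := by rw [← hMY]
    _ = (Y * M * Y) * (M * X) := by simp only [Matrix.mul_assoc]
    _ = Y * (M * X) := by rw [hY2]
    _ = (Y * M) * X := by rw [Matrix.mul_assoc]
  rw [h1, ← h2]

lemma mpinv_symm {M X : Matrix n n ℝ} (hM : Mᵀ = M) (hX : IsMPInv M X) : Xᵀ = X := by
  obtain ⟨h1, h2, h3, h4⟩ := hX
  have e : M * Xᵀ = X * M := by
    calc M * Xᵀ = Mᵀ * Xᵀ := by rw [hM]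
    _ = (X * M)ᵀ := (Matrix.transpose_mul X M).symm
    _ = X * M := h4
  have e2 : Xᵀ * M = M * X := by
    calc Xᵀ * M = Xᵀ * Mᵀ := by rw [hM]
    _ = (M * X)ᵀ := (Matrix.transpose_mul M X).symm
    _ = M * X := h3
  have hXt : IsMPInv M Xᵀ := by
    refine ⟨?_, ?_, ?_, ?_⟩
    · have : M * Xᵀ * M = (M * X * M)ᵀ := by
        simp [Matrix.transpose_mul, Matrix.mul_assoc, hM]
      rw [this, h1, hM]
    · have : Xᵀ * M * Xᵀ = (X * M * X)ᵀ := by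
        simp [Matrix.transpose_mul, Matrix.mul_assoc, hM]
      rw [this, h2]
    · rw [e]; exact h4
    · rw [e2]; exact h3
  exact mpinv_unique hXt ⟨h1, h2, h3, h4⟩

lemma proj_fix {Ht Hd Hh : Matrix n n ℝ} (hh : Hhᵀ = Hh) (hsq : Hh * Hh = Ht)
    (hmp : IsMPInv Ht Hd) : (Ht * Hd) * Hh = Hh := by
  obtain ⟨h1, h2, h3, h4⟩ := hmp
  have hHtt : Htᵀ = Ht := by rw [← hsq, Matrix.transpose_mul, hh, hsq]
  have hQHt : (Ht * Hd) * Ht = Ht := h1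
  have hHtQ : Ht * (Ht * Hd) = Ht := by
    calc Ht * (Ht * Hd) = Htᵀ * (Ht * Hd) := by rw [hHtt]
    _ = Htᵀ * (Ht * Hd)ᵀ := by rw [h3]
    _ = ((Ht * Hd) * Ht)ᵀ := (Matrix.transpose_mul (Ht * Hd) Ht).symm
    _ = Htᵀ := by rw [h1]
    _ = Ht := hHtt
  set Q := Ht * Hd with hQ
  set R := Hh - Q * Hh with hR
  have hRt : Rᵀ = Hh - Hh * Q := by
    rw [hR, Matrix.transpose_sub, Matrix.transpose_mul, hh, h3]
  have hRRt : R * Rᵀ = 0 := by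
    rw [hR, hRt]
    have expand : (Hh - Q * Hh) * (Hh - Hh * Q)
        = Hh * Hh - (Hh * Hh) * Q - Q * (Hh * Hh) + Q * ((Hh * Hh) * Q) := by
      noncomm_ring
    rw [expand, hsq, hHtQ, hQHt]
    abel
  have hR0 : R = 0 := by
    have h5 : (Rᵀ)ᴴ * Rᵀ = 0 := by
      rw [Matrix.conjTranspose_eq_transpose_of_trivial, Matrix.transpose_transpose, hRRt]
    have h6 := Matrix.conjTranspose_mul_self_eq_zero.mp h5
    calc R = Rᵀᵀ := (Matrix.transpose_transpose _).symm
    _ = 0 := by rw [h6]; simp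
  have hfin : Hh - Q * Hh = 0 := by rw [← hR]; exact hR0
  exact (sub_eq_zero.mp hfin).symm

lemma psd_kron {a b : Type*} [Fintype a] [DecidableEq a] [Fintype b] [DecidableEq b]
    {M : Matrix a a ℝ} (h : M.PosSemidef) : (M ⊗ₖ (1 : Matrix b b ℝ)).PosSemidef := by
  obtain ⟨B, hB⟩ : ∃ B : Matrix a a ℝ, M = Bᴴ * B := by
    open scoped MatrixOrder in
    obtain ⟨B, hB⟩ := CStarAlgebra.nonneg_iff_eq_star_mul_self.mp h.nonneg
    exact ⟨B, hB⟩
  have key : M ⊗ₖ (1 : Matrix b b ℝ)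
      = (B ⊗ₖ (1 : Matrix b b ℝ))ᴴ * (B ⊗ₖ (1 : Matrix b b ℝ)) := by
    rw [Matrix.conjTranspose_eq_transpose_of_trivial]
    have ht : (B ⊗ₖ (1 : Matrix b b ℝ))ᵀ = Bᵀ ⊗ₖ (1 : Matrix b b ℝ) := by
      have h2 := Matrix.kroneckerMap_transpose (· * ·) B (1 : Matrix b b ℝ)
      rw [Matrix.transpose_one] at h2
      exact h2.symm
    rw [ht, ← Matrix.mul_kronecker_mul, Matrix.one_mul, hB,
      Matrix.conjTranspose_eq_transpose_of_trivial]
  rw [key]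
  exact Matrix.posSemidef_conjTranspose_mul_self _

lemma kron_transpose_eq {a b : Type*} [Fintype a] [DecidableEq a] [Fintype b] [DecidableEq b]
    {M : Matrix a a ℝ} (hM : Mᵀ = M) : (M ⊗ₖ (1 : Matrix b b ℝ))ᵀ = M ⊗ₖ (1 : Matrix b b ℝ) := by
  have h2 := Matrix.kroneckerMap_transpose (· * ·) M (1 : Matrix b b ℝ)
  rw [Matrix.transpose_one] at h2
  rw [← h2, hM]

end aux

theorem stmt10
    (N m p : ℕ) (hN : 1 ≤ N) (hm : 1 ≤ m) (hp : 1 ≤ p)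
    (d : Fin N → ℕ)
    (X : ∀ i : Fin N, Set (Fin (d i) → ℝ))
    (hXne : ∀ i, (X i).Nonempty) (hXcl : ∀ i, IsClosed (X i))
    (hXcv : ∀ i, Convex ℝ (X i))
    (f : ∀ i : Fin N, (Fin (d i) → ℝ) → ℝ)
    (hf : ∀ i, ConvexOn ℝ Set.univ (f i))
    (g : ∀ i : Fin N, (Fin (d i) → ℝ) → Fin m → ℝ)
    (hg : ∀ i j, ConvexOn ℝ Set.univ (fun xi => g i xi j))
    (B : ∀ i : Fin N, Matrix (Fin p) (Fin (d i)) ℝ) (c : ∀ i : Fin N, Fin p → ℝ)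
    (F : (∀ i, Fin (d i) → ℝ) → ℝ) (hF : ∀ x, F x = ∑ i, f i (x i))
    (tg : (∀ i, Fin (d i) → ℝ) → Idx N m p → ℝ)
    (htg1 : ∀ x (i : Fin N) (j : Fin m), tg x (i, Sum.inl j) = g i (x i) j)
    (htg2 : ∀ x (i : Fin N) (j : Fin p), tg x (i, Sum.inr j) = (B i *ᵥ x i + c i) j)
    (ρ : ℝ) (hρ : 0 < ρ)
    (PA PH PHt : Matrix (Fin N) (Fin N) ℝ)
    (hPA : PA.PosSemidef) (hPH : PH.PosSemidef) (hPHt : PHt.PosSemidef)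
    (hDdiag : (PA + ρ • PH).IsDiag) (hDpd : (PA + ρ • PH).PosDef)
    (hHHt : (PH - PHt).PosSemidef)
    (hPHnull : ∀ v : Fin N → ℝ, PH *ᵥ v = 0 ↔ ∃ t : ℝ, v = fun _ => t)
    (hPHtnull : ∀ v : Fin N → ℝ, PHt *ᵥ v = 0 ↔ ∃ t : ℝ, v = fun _ => t)
    (A Htld D : Matrix (Idx N m p) (Idx N m p) ℝ)
    (hA : A = PA ⊗ₖ (1 : Matrix (Blk m p) (Blk m p) ℝ))
    (hHtld : Htld = PHt ⊗ₖ (1 : Matrix (Blk m p) (Blk m p) ℝ))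
    (hD : D = A + ρ • (PH ⊗ₖ (1 : Matrix (Blk m p) (Blk m p) ℝ)))
    (Hhalf : Matrix (Idx N m p) (Idx N m p) ℝ)
    (hHhalfpsd : Hhalf.PosSemidef) (hHhalfsq : Hhalf * Hhalf = Htld)
    (Htdag : Matrix (Idx N m p) (Idx N m p) ℝ) (hHtdag : IsMPInv Htld Htdag)
    (Hhalfdag : Matrix (Idx N m p) (Idx N m p) ℝ) (hHhalfdag : IsMPInv Hhalf Hhalfdag)
    (x : ℕ → ∀ i, Fin (d i) → ℝ) (y z : ℕ → Idx N m p → ℝ)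
    (hxX : ∀ k, ∀ i, x (k + 1) i ∈ X i)
    (hy0 : memK (y 0))
    (hyupd : ∀ k, y (k + 1) = projK (D⁻¹ *ᵥ ((A *ᵥ y k) - (Hhalf *ᵥ z k) + tg (x (k + 1)))))
    (hzupd : ∀ k, z (k + 1) = z k + ρ • (Hhalf *ᵥ y (k + 1)))
    (xs : ∀ i, Fin (d i) → ℝ) (hxsX : ∀ i, xs i ∈ X i)
    (hxsg : ∀ j, (∑ i, g i (xs i) j) ≤ 0)
    (hxsh : ∀ j, (∑ i, (B i *ᵥ xs i + c i) j) = 0)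
    (mus : Fin m → ℝ) (hmus : ∀ j, 0 ≤ mus j) (lams : Fin p → ℝ)
    (hcs : (∑ j, mus j * ∑ i, g i (xs i) j) = 0)
    (hsaddle : ∀ w, (∀ i, w i ∈ X i) →
      F xs + (∑ j, mus j * ∑ i, g i (xs i) j) + (∑ j, lams j * ∑ i, (B i *ᵥ xs i + c i) j)
        ≤ F w + (∑ j, mus j * ∑ i, g i (w i) j) + (∑ j, lams j * ∑ i, (B i *ᵥ w i + c i) j))
    (ys : Idx N m p → ℝ) (hys : ∀ (i : Fin N) (j : Blk m p), ys (i, j) = Sum.elim mus lams j)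
    (zstar vstar : Idx N m p → ℝ)
    (hzstar : zstar = Hhalfdag *ᵥ tg xs)
    (hvstar : vstar = Hhalf *ᵥ zstar)
    :
    ∀ k : ℕ,
      (y (k + 1)) ⬝ᵥ
          (D *ᵥ ((D⁻¹ *ᵥ ((A *ᵥ y k) - (Hhalf *ᵥ z k))) - y (k + 1)) + vstar)
        ≤ (1 / 2) * (quadForm A (y k) - quadForm A (y (k + 1)))
          + (1 / (2 * ρ)) *
            (quadForm Htdag ((Hhalf *ᵥ z k) - vstar)
              - quadForm Htdag ((Hhalf *ᵥ z (k + 1)) - vstar)) := by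
  intro k
  classical
  -- symmetry facts
  have hPAt : PAᵀ = PA := by
    rw [← Matrix.conjTranspose_eq_transpose_of_trivial]; exact hPA.1
  have hHhalft : Hhalfᵀ = Hhalf := by
    rw [← Matrix.conjTranspose_eq_transpose_of_trivial]; exact hHhalfpsd.1
  have hAt : Aᵀ = A := by rw [hA]; exact kron_transpose_eq hPAt
  have hHtldt : Htldᵀ = Htld := by
    rw [← hHhalfsq, Matrix.transpose_mul, hHhalft]
  have hdagt : Htdagᵀ = Htdag := mpinv_symm hHtldt hHtdag
  have hQHh : (Htld * Htdag) * Hhalf = Hhalf := proj_fix hHhalft hHhalfsq hHtdag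
  have hQQ : Htdag * Htld = Htld * Htdag := by
    calc Htdag * Htld = Htdagᵀ * Htldᵀ := by rw [hdagt, hHtldt]
    _ = (Htld * Htdag)ᵀ := (Matrix.transpose_mul Htld Htdag).symm
    _ = Htld * Htdag := hHtdag.2.2.1
  -- D is invertible
  have hDkron : D = (PA + ρ • PH) ⊗ₖ (1 : Matrix (Blk m p) (Blk m p) ℝ) := by
    rw [hD, hA, Matrix.add_kronecker, Matrix.smul_kronecker]
  have hdet : IsUnit D.det := by
    rw [hDkron, Matrix.det_kronecker, Matrix.det_one, one_pow, mul_one]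
    exact isUnit_iff_ne_zero.mpr (pow_ne_zero _ (ne_of_gt hDpd.det_pos))
  have hDinv : ∀ s : Idx N m p → ℝ, D *ᵥ (D⁻¹ *ᵥ s) = s := by
    intro s
    rw [Matrix.mulVec_mulVec, Matrix.mul_nonsing_inv D hdet, Matrix.one_mulVec]
  set a := y k with ha
  set b := y (k + 1) with hb
  set HM : Matrix (Idx N m p) (Idx N m p) ℝ
    := PH ⊗ₖ (1 : Matrix (Blk m p) (Blk m p) ℝ) with hHM
  set vk := Hhalf *ᵥ z k with hvk
  set e := vk - vstar with he2
  have hDb : D *ᵥ b = A *ᵥ b + ρ • (HM *ᵥ b) := by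
    rw [hD, Matrix.add_mulVec, Matrix.smul_mulVec]
  -- LHS simplification
  have hLHS : b ⬝ᵥ (D *ᵥ ((D⁻¹ *ᵥ (A *ᵥ a - vk)) - b) + vstar)
      = b ⬝ᵥ (A *ᵥ a) - (b ⬝ᵥ (A *ᵥ b) + ρ * (b ⬝ᵥ (HM *ᵥ b))) - b ⬝ᵥ e := by
    rw [Matrix.mulVec_sub, hDinv, hDb, he2]
    simp only [dotProduct_add, dotProduct_sub, dotProduct_smul, smul_eq_mul]
    ring
  -- z-update
  have hvk1 : Hhalf *ᵥ z (k + 1) = vk + ρ • (Htld *ᵥ b) := by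
    rw [hzupd k, Matrix.mulVec_add, Matrix.mulVec_smul, Matrix.mulVec_mulVec, hHhalfsq, hvk]
  -- range facts
  have he : e = Hhalf *ᵥ (z k - zstar) := by
    rw [he2, hvk, hvstar, Matrix.mulVec_sub]
  have hQe : (Htld * Htdag) *ᵥ e = e := by
    rw [he, Matrix.mulVec_mulVec, hQHh]
  -- cross terms
  have hcross1 : e ⬝ᵥ (Htdag *ᵥ (ρ • (Htld *ᵥ b))) = ρ * (b ⬝ᵥ e) := by
    rw [Matrix.mulVec_smul, dotProduct_smul, smul_eq_mul]
    congr 1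
    rw [Matrix.mulVec_mulVec, dotP_symm, hHtdag.2.2.2, hQQ, hQe, dotProduct_comm]
  have hcross2 : (ρ • (Htld *ᵥ b)) ⬝ᵥ (Htdag *ᵥ e) = ρ * (b ⬝ᵥ e) := by
    rw [smul_dotProduct, smul_eq_mul]
    congr 1
    rw [dotP_symm', hHtldt, Matrix.mulVec_mulVec, hQe]
  have hquad : (ρ • (Htld *ᵥ b)) ⬝ᵥ (Htdag *ᵥ (ρ • (Htld *ᵥ b)))
      = ρ ^ 2 * (b ⬝ᵥ (Htld *ᵥ b)) := by
    rw [smul_dotProduct, Matrix.mulVec_smul, dotProduct_smul, smul_eq_mul, smul_eq_mul]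
    have hmid : (Htld *ᵥ b) ⬝ᵥ (Htdag *ᵥ (Htld *ᵥ b)) = b ⬝ᵥ (Htld *ᵥ b) := by
      rw [dotP_symm', hHtldt, Matrix.mulVec_mulVec, Matrix.mulVec_mulVec, hHtdag.1]
    rw [hmid]; ring
  -- RHS simplification
  have hRHS : quadForm Htdag (vk - vstar) - quadForm Htdag (Hhalf *ᵥ z (k + 1) - vstar)
      = -(2 * ρ * (b ⬝ᵥ e)) - ρ ^ 2 * (b ⬝ᵥ (Htld *ᵥ b)) := by
    rw [hvk1]
    have hshift : vk + ρ • (Htld *ᵥ b) - vstar = e + ρ • (Htld *ᵥ b) := by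
      rw [he2]; abel
    rw [hshift, ← he2]
    simp only [quadForm, Matrix.mulVec_add, dotProduct_add, add_dotProduct]
    rw [hcross1, hcross2, hquad]
    ring
  -- positivity facts
  have hpos1 : 0 ≤ (a - b) ⬝ᵥ (A *ᵥ (a - b)) := by
    have h0 := (psd_kron (b := Blk m p) hPA).dotProduct_mulVec_nonneg (a - b)
    rw [← hA] at h0
    simpa using h0
  have hpos2 : 0 ≤ b ⬝ᵥ (HM *ᵥ b) := by
    have h0 := (psd_kron (b := Blk m p) hPH).dotProduct_mulVec_nonneg b
    rw [← hHM] at h0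
    simpa using h0
  have hpos3 : 0 ≤ b ⬝ᵥ (HM *ᵥ b) - b ⬝ᵥ (Htld *ᵥ b) := by
    have h0 := (psd_kron (b := Blk m p) hHHt).dotProduct_mulVec_nonneg b
    have hsub : (PH - PHt) ⊗ₖ (1 : Matrix (Blk m p) (Blk m p) ℝ) = HM - Htld := by
      have h2 := Matrix.add_kronecker (PH - PHt) PHt (1 : Matrix (Blk m p) (Blk m p) ℝ)
      rw [sub_add_cancel] at h2
      rw [← hHM, ← hHtld] at h2
      rw [h2]; abel
    rw [hsub] at h0
    have h0' : 0 ≤ b ⬝ᵥ ((HM - Htld) *ᵥ b) := by simpa using h0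
    rw [Matrix.sub_mulVec, dotProduct_sub] at h0'
    exact h0'
  have hcrossA : a ⬝ᵥ (A *ᵥ b) = b ⬝ᵥ (A *ᵥ a) := by
    rw [dotP_symm, hAt, dotProduct_comm]
  have hexpA : (a - b) ⬝ᵥ (A *ᵥ (a - b))
      = a ⬝ᵥ (A *ᵥ a) - 2 * (b ⬝ᵥ (A *ᵥ a)) + b ⬝ᵥ (A *ᵥ b) := by
    simp only [Matrix.mulVec_sub, dotProduct_sub, sub_dotProduct]
    rw [hcrossA]; ring
  rw [hexpA] at hpos1
  have h2' : 0 ≤ ρ * (b ⬝ᵥ (HM *ᵥ b)) := mul_nonneg hρ.le hpos2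
  have h3' : 0 ≤ ρ * (b ⬝ᵥ (HM *ᵥ b)) - ρ * (b ⬝ᵥ (Htld *ᵥ b)) := by
    have := mul_nonneg hρ.le hpos3
    rw [mul_sub] at this
    exact this
  have hrho : (1 / (2 * ρ)) * (-(2 * ρ * (b ⬝ᵥ e)) - ρ ^ 2 * (b ⬝ᵥ (Htld *ᵥ b)))
      = -(b ⬝ᵥ e) - ρ * (b ⬝ᵥ (Htld *ᵥ b)) / 2 := by
    field_simp
  rw [hLHS, hRHS, hrho]
  simp only [quadForm]
  linarith [hpos1, h2', h3']
end

section
/- (Intermediate inequality in the DUCA objective analysis) Suppose the problem setup holds, each X_i is additionally compact, the saddle point hypotheses hold, and the sequences (x^k)_{k≥1}, (y^k)_{k≥0}, (z^k)_{k≥0} are generated by DUCA. Then for every k ≥ 0: f(x^{k+1}) − f(x*) ≤ ⟨y^{k+1}, D(ŷ^k − y^{k+1}) + v*⟩. -/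
open Matrix
open scoped Kronecker

lemma kron_one_diag {N : ℕ} {β : Type*} [Fintype β] [DecidableEq β]
    (Q : Matrix (Fin N) (Fin N) ℝ) (hQ : Q.IsDiag) :
    Q ⊗ₖ (1 : Matrix β β ℝ) = Matrix.diagonal (fun ij : Fin N × β => Q ij.1 ij.1) := by
  ext ⟨i,j⟩ ⟨i',j'⟩
  by_cases h : i = i'
  · subst h
    by_cases h2 : j = j'
    · subst h2; simp [Matrix.diagonal]
    · simp [Matrix.diagonal, Matrix.one_apply, h2, Prod.ext_iff]
  · simp [Matrix.diagonal, hQ h, Prod.ext_iff, h]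

lemma kron_one_mulVec {N : ℕ} {β : Type*} [Fintype β] [DecidableEq β]
    (P : Matrix (Fin N) (Fin N) ℝ) (e : Fin N × β → ℝ) (i : Fin N) (j : β) :
    ((P ⊗ₖ (1 : Matrix β β ℝ)) *ᵥ e) (i,j) = (P *ᵥ fun i' => e (i', j)) i := by
  simp only [Matrix.mulVec, dotProduct, Fintype.sum_prod_type, Matrix.kroneckerMap_apply,
    Matrix.one_apply]
  rw [Finset.sum_comm]
  simp [Finset.sum_ite_eq, mul_ite, mul_comm]

lemma scal1 (v δ : ℝ) : (max (v+δ) 0)^2 ≤ (max v 0)^2 + 2 * max v 0 * δ + δ^2 := by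
  rcases le_or_gt (v+δ) 0 with h | h
  · rw [max_eq_right h]
    rcases le_or_gt v 0 with h2 | h2
    · rw [max_eq_right h2]; nlinarith
    · rw [max_eq_left h2.le]; nlinarith
  · rw [max_eq_left h.le]
    rcases le_or_gt v 0 with h2 | h2
    · rw [max_eq_right h2]; nlinarith
    · rw [max_eq_left h2.le]; nlinarith

lemma scal2 (r r' : ℝ) (h : r ≤ r') : (max r 0)^2 ≤ (max r' 0)^2 := by
  have h1 : max r 0 ≤ max r' 0 := max_le_max h le_rfl
  have h2 : (0:ℝ) ≤ max r 0 := le_max_right _ _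
  nlinarith

lemma sq_mulVec_eq_zero {n : Type*} [Fintype n] [DecidableEq n] (M : Matrix n n ℝ)
    (hM : Mᵀ = M) (x : n → ℝ) (h : (M * M) *ᵥ x = 0) : M *ᵥ x = 0 := by
  have h2 : x ᵥ* M = M *ᵥ x := by
    conv_lhs => rw [← hM]
    rw [Matrix.vecMul_transpose]
  have h1 : x ⬝ᵥ ((M * M) *ᵥ x) = (M *ᵥ x) ⬝ᵥ (M *ᵥ x) := by
    rw [← Matrix.mulVec_mulVec, Matrix.dotProduct_mulVec, h2]
  rw [h, dotProduct_zero] at h1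
  funext i
  have := (Finset.sum_eq_zero_iff_of_nonneg
    (fun j (_ : j ∈ Finset.univ) => mul_self_nonneg ((M *ᵥ x) j))).mp h1.symm i (Finset.mem_univ i)
  have := mul_self_eq_zero.mp this
  simpa using this

set_option maxHeartbeats 2000000 in
theorem stmt12
    (N m p : ℕ) (hN : 1 ≤ N) (hm : 1 ≤ m) (hp : 1 ≤ p)
    (d : Fin N → ℕ)
    (X : ∀ i : Fin N, Set (Fin (d i) → ℝ))
    (hXne : ∀ i, (X i).Nonempty) (hXcl : ∀ i, IsClosed (X i))
    (hXcv : ∀ i, Convex ℝ (X i))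
    (f : ∀ i : Fin N, (Fin (d i) → ℝ) → ℝ)
    (hf : ∀ i, ConvexOn ℝ Set.univ (f i))
    (g : ∀ i : Fin N, (Fin (d i) → ℝ) → Fin m → ℝ)
    (hg : ∀ i j, ConvexOn ℝ Set.univ (fun xi => g i xi j))
    (B : ∀ i : Fin N, Matrix (Fin p) (Fin (d i)) ℝ) (c : ∀ i : Fin N, Fin p → ℝ)
    (F : (∀ i, Fin (d i) → ℝ) → ℝ) (hF : ∀ x, F x = ∑ i, f i (x i))
    (tg : (∀ i, Fin (d i) → ℝ) → Idx N m p → ℝ)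
    (htg1 : ∀ x (i : Fin N) (j : Fin m), tg x (i, Sum.inl j) = g i (x i) j)
    (htg2 : ∀ x (i : Fin N) (j : Fin p), tg x (i, Sum.inr j) = (B i *ᵥ x i + c i) j)
    (ρ : ℝ) (hρ : 0 < ρ)
    (PA PH PHt : Matrix (Fin N) (Fin N) ℝ)
    (hPA : PA.PosSemidef) (hPH : PH.PosSemidef) (hPHt : PHt.PosSemidef)
    (hDdiag : (PA + ρ • PH).IsDiag) (hDpd : (PA + ρ • PH).PosDef)
    (hHHt : (PH - PHt).PosSemidef)
    (hPHnull : ∀ v : Fin N → ℝ, PH *ᵥ v = 0 ↔ ∃ t : ℝ, v = fun _ => t)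
    (hPHtnull : ∀ v : Fin N → ℝ, PHt *ᵥ v = 0 ↔ ∃ t : ℝ, v = fun _ => t)
    (A Htld D : Matrix (Idx N m p) (Idx N m p) ℝ)
    (hA : A = PA ⊗ₖ (1 : Matrix (Blk m p) (Blk m p) ℝ))
    (hHtld : Htld = PHt ⊗ₖ (1 : Matrix (Blk m p) (Blk m p) ℝ))
    (hD : D = A + ρ • (PH ⊗ₖ (1 : Matrix (Blk m p) (Blk m p) ℝ)))
    (Hhalf : Matrix (Idx N m p) (Idx N m p) ℝ)
    (hHhalfpsd : Hhalf.PosSemidef) (hHhalfsq : Hhalf * Hhalf = Htld)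
    (hXcp : ∀ i, IsCompact (X i))
    (Hhalfdag : Matrix (Idx N m p) (Idx N m p) ℝ) (hHhalfdag : IsMPInv Hhalf Hhalfdag)
    (x : ℕ → ∀ i, Fin (d i) → ℝ) (y z : ℕ → Idx N m p → ℝ)
    (hxX : ∀ k, ∀ i, x (k + 1) i ∈ X i)
    (hy0 : memK (y 0))
    (hyupd : ∀ k, y (k + 1) = projK (D⁻¹ *ᵥ ((A *ᵥ y k) - (Hhalf *ᵥ z k) + tg (x (k + 1)))))
    (hzupd : ∀ k, z (k + 1) = z k + ρ • (Hhalf *ᵥ y (k + 1)))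
    (hxmin : ∀ k, ∀ w, (∀ i, w i ∈ X i) →
      F (x (k + 1))
          + (1 / 2) * quadForm D⁻¹ (projK ((A *ᵥ y k) - (Hhalf *ᵥ z k) + tg (x (k + 1))))
        ≤ F w + (1 / 2) * quadForm D⁻¹ (projK ((A *ᵥ y k) - (Hhalf *ᵥ z k) + tg w)))
    (xs : ∀ i, Fin (d i) → ℝ) (hxsX : ∀ i, xs i ∈ X i)
    (hxsg : ∀ j, (∑ i, g i (xs i) j) ≤ 0)
    (hxsh : ∀ j, (∑ i, (B i *ᵥ xs i + c i) j) = 0)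
    (mus : Fin m → ℝ) (hmus : ∀ j, 0 ≤ mus j) (lams : Fin p → ℝ)
    (hcs : (∑ j, mus j * ∑ i, g i (xs i) j) = 0)
    (hsaddle : ∀ w, (∀ i, w i ∈ X i) →
      F xs + (∑ j, mus j * ∑ i, g i (xs i) j) + (∑ j, lams j * ∑ i, (B i *ᵥ xs i + c i) j)
        ≤ F w + (∑ j, mus j * ∑ i, g i (w i) j) + (∑ j, lams j * ∑ i, (B i *ᵥ w i + c i) j))
    (ys : Idx N m p → ℝ) (hys : ∀ (i : Fin N) (j : Blk m p), ys (i, j) = Sum.elim mus lams j)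
    (zstar vstar : Idx N m p → ℝ)
    (hzstar : zstar = Hhalfdag *ᵥ tg xs)
    (hvstar : vstar = Hhalf *ᵥ zstar)
    :
    ∀ k : ℕ,
      F (x (k + 1)) - F xs
        ≤ (y (k + 1)) ⬝ᵥ
            (D *ᵥ ((D⁻¹ *ᵥ ((A *ᵥ y k) - (Hhalf *ᵥ z k))) - y (k + 1)) + vstar) := by
  intro k
  -- instantiate hypotheses before `set`
  have hyk := hyupd k
  have hminS := hxmin k
  have hxXk := hxX k
  -- diagonal structure of D
  have hddpos : ∀ ij : Idx N m p, 0 < (PA + ρ • PH) ij.1 ij.1 := by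
    intro ij
    exact hDpd.diag_pos
  set Q : Matrix (Fin N) (Fin N) ℝ := PA + ρ • PH with hQdef
  set dd : Idx N m p → ℝ := fun ij => Q ij.1 ij.1 with hdddef
  have hdd0 : ∀ ij, dd ij ≠ 0 := fun ij => (hddpos ij).ne'
  have hDd : D = Matrix.diagonal dd := by
    rw [hD, hA]
    have : PA ⊗ₖ (1 : Matrix (Blk m p) (Blk m p) ℝ) + ρ • (PH ⊗ₖ 1) = Q ⊗ₖ 1 := by
      rw [hQdef, Matrix.add_kronecker, Matrix.smul_kronecker]
    rw [this, kron_one_diag Q hDdiag]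
  have hDinv : D⁻¹ = Matrix.diagonal (fun ij => (dd ij)⁻¹) := by
    rw [hDd]
    apply Matrix.inv_eq_right_inv
    rw [Matrix.diagonal_mul_diagonal]
    ext ij ij'
    by_cases h : ij = ij'
    · subst h
      simp [Matrix.one_apply_eq, mul_inv_cancel₀ (hdd0 ij)]
    · simp [Matrix.diagonal_apply_ne _ h, Matrix.one_apply_ne h]
  set x1 := x (k + 1) with hx1def
  set s : Idx N m p → ℝ := (A *ᵥ y k) - (Hhalf *ᵥ z k) with hsdef
  set u : Idx N m p → ℝ := s + tg x1 with hudef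
  have huap : ∀ ij, u ij = s ij + tg x1 ij := fun ij => rfl
  -- componentwise formula for y (k+1)
  have hy1 : ∀ ij : Idx N m p, y (k+1) ij = (dd ij)⁻¹ * projK u ij := by
    intro ij
    rw [hyk, hDinv]
    obtain ⟨i, j⟩ := ij
    cases j with
    | inl j =>
      show max ((Matrix.diagonal (fun ij => (dd ij)⁻¹) *ᵥ u) (i, Sum.inl j)) 0
        = (dd (i, Sum.inl j))⁻¹ * max (u (i, Sum.inl j)) 0
      rw [Matrix.mulVec_diagonal,
        mul_max_of_nonneg _ _ (inv_nonneg.mpr (hddpos (i, Sum.inl j)).le), mul_zero]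
    | inr j =>
      show (Matrix.diagonal (fun ij => (dd ij)⁻¹) *ᵥ u) (i, Sum.inr j)
        = (dd (i, Sum.inr j))⁻¹ * u (i, Sum.inr j)
      rw [Matrix.mulVec_diagonal]
  have hy1nn : ∀ i j, 0 ≤ y (k+1) (i, Sum.inl j) := by
    intro i j
    rw [hy1]
    exact mul_nonneg (inv_nonneg.mpr (hddpos _).le) (le_max_right _ _)
  -- Step 1 : rewrite RHS
  have hstep1 : (y (k+1)) ⬝ᵥ (D *ᵥ ((D⁻¹ *ᵥ s) - y (k+1)) + vstar)
      = ∑ ij : Idx N m p, y (k+1) ij * (vstar ij - tg x1 ij) := by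
    have hDs : D *ᵥ (D⁻¹ *ᵥ s) = s := by
      rw [hDinv, hDd]
      funext ij
      rw [Matrix.mulVec_diagonal, Matrix.mulVec_diagonal, ← mul_assoc,
        mul_inv_cancel₀ (hdd0 ij), one_mul]
    have hDy : D *ᵥ y (k+1) = projK u := by
      rw [hDd]
      funext ij
      rw [Matrix.mulVec_diagonal, hy1 ij, ← mul_assoc, mul_inv_cancel₀ (hdd0 ij), one_mul]
    rw [Matrix.mulVec_sub, hDs, hDy]
    simp only [dotProduct, Pi.add_apply, Pi.sub_apply]
    apply Finset.sum_congr rfl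
    intro ij _
    have hyu : y (k+1) ij * projK u ij = y (k+1) ij * (s ij + tg x1 ij) := by
      rw [← huap ij]
      obtain ⟨i, j⟩ := ij
      cases j with
      | inl j =>
        rw [hy1]
        show ((dd (i, Sum.inl j))⁻¹ * max (u (i, Sum.inl j)) 0) * max (u (i, Sum.inl j)) 0
          = ((dd (i, Sum.inl j))⁻¹ * max (u (i, Sum.inl j)) 0) * u (i, Sum.inl j)
        rcases le_or_gt (u (i, Sum.inl j)) 0 with h | h
        · rw [max_eq_right h]; ring
        · rw [max_eq_left h.le]
      | inr j => rfl
    linear_combination -hyu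
  -- Step 2 : ⟨y, tg xs⟩ ≤ ⟨y, vstar⟩
  have hMsym : Hhalfᵀ = Hhalf := hHhalfpsd.1
  obtain ⟨h1, h2, h3, h4⟩ := hHhalfdag
  have e1 : Hhalf * Hhalfdagᵀ * Hhalf = Hhalf := by
    have h := congrArg Matrix.transpose h1
    rwa [Matrix.transpose_mul, Matrix.transpose_mul, hMsym, ← Matrix.mul_assoc] at h
  have hMMMd : Hhalf * (Hhalf * Hhalfdag) = Hhalf := by
    calc Hhalf * (Hhalf * Hhalfdag) = Hhalf * (Hhalf * Hhalfdag)ᵀ := by rw [h3]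
      _ = Hhalf * (Hhalfdagᵀ * Hhalfᵀ) := by rw [Matrix.transpose_mul]
      _ = Hhalf * Hhalfdagᵀ * Hhalf := by rw [hMsym, Matrix.mul_assoc]
      _ = Hhalf := e1
  have hvstar2 : vstar = Hhalf *ᵥ (Hhalfdag *ᵥ tg xs) := by rw [hvstar, hzstar]
  set ev : Idx N m p → ℝ := tg xs - vstar with hevdef
  have hMe : Hhalf *ᵥ ev = 0 := by
    have hMv : Hhalf *ᵥ vstar = Hhalf *ᵥ tg xs := by
      rw [hvstar2, Matrix.mulVec_mulVec, Matrix.mulVec_mulVec, Matrix.mul_assoc, hMMMd]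
    rw [hevdef, Matrix.mulVec_sub, hMv, sub_self]
  have hHte : Htld *ᵥ ev = 0 := by
    rw [← hHhalfsq, ← Matrix.mulVec_mulVec, hMe, Matrix.mulVec_zero]
  have hcol : ∀ jb : Blk m p, ∃ t : ℝ, (fun i => ev (i, jb)) = fun _ => t := by
    intro jb
    apply (hPHtnull _).mp
    funext i
    calc (PHt *ᵥ fun i' => ev (i', jb)) i = ((PHt ⊗ₖ 1) *ᵥ ev) (i, jb) :=
          (kron_one_mulVec PHt ev i jb).symm
      _ = (Htld *ᵥ ev) (i, jb) := by rw [hHtld]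
      _ = 0 := by rw [hHte]; rfl
  choose tj htj using hcol
  have htj' : ∀ (i : Fin N) (jb : Blk m p), ev (i, jb) = tj jb := fun i jb =>
    congrFun (htj jb) i
  have hMsj : ∀ jb : Blk m p,
      Hhalf *ᵥ (fun ij : Idx N m p => if ij.2 = jb then (1:ℝ) else 0) = 0 := by
    intro jb
    apply sq_mulVec_eq_zero Hhalf hMsym
    rw [hHhalfsq]
    funext ij
    obtain ⟨i, j⟩ := ij
    rw [hHtld, kron_one_mulVec]
    have hcf : (fun i' : Fin N => if (((i' : Fin N), j) : Idx N m p).2 = jb then (1:ℝ) else 0)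
        = fun _ => (if j = jb then (1:ℝ) else 0) := rfl
    rw [hcf, (hPHtnull _).mpr ⟨_, rfl⟩]
    rfl
  have hsumvstar : ∀ jb : Blk m p, ∑ i, vstar (i, jb) = 0 := by
    intro jb
    have h0 : (fun ij : Idx N m p => if ij.2 = jb then (1:ℝ) else 0) ⬝ᵥ vstar
        = ∑ i, vstar (i, jb) := by
      simp [dotProduct, Fintype.sum_prod_type, ite_mul]
    rw [← h0, hvstar2, Matrix.dotProduct_mulVec]
    have hvm : (fun ij : Idx N m p => if ij.2 = jb then (1:ℝ) else 0) ᵥ* Hhalf = 0 := by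
      conv_lhs => rw [← hMsym]
      rw [Matrix.vecMul_transpose, hMsj jb]
    rw [hvm, zero_dotProduct]
  have hNpos : (0:ℝ) < N := by
    have : (1:ℝ) ≤ (N:ℝ) := by exact_mod_cast hN
    linarith
  have hsumev : ∀ jb : Blk m p, (N : ℝ) * tj jb = ∑ i, tg xs (i, jb) := by
    intro jb
    have hl : ∑ i, ev (i, jb) = (N:ℝ) * tj jb := by
      simp [htj', Finset.sum_const, nsmul_eq_mul]
    have hr : ∑ i, ev (i, jb) = ∑ i, tg xs (i, jb) - ∑ i, vstar (i, jb) := by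
      rw [hevdef, ← Finset.sum_sub_distrib]
      rfl
    rw [← hl, hr, hsumvstar, sub_zero]
  have htle : ∀ j : Fin m, tj (Sum.inl j) ≤ 0 := by
    intro j
    have h0 := hsumev (Sum.inl j)
    have h1 : ∑ i, tg xs (i, Sum.inl j) = ∑ i, g i (xs i) j :=
      Finset.sum_congr rfl (fun i _ => htg1 xs i j)
    have := hxsg j
    nlinarith
  have hteq : ∀ j : Fin p, tj (Sum.inr j) = 0 := by
    intro j
    have h0 := hsumev (Sum.inr j)
    have h1 : ∑ i, tg xs (i, Sum.inr j) = ∑ i, (B i *ᵥ xs i + c i) j :=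
      Finset.sum_congr rfl (fun i _ => htg2 xs i j)
    have := hxsh j
    have : (N:ℝ) * tj (Sum.inr j) = 0 := by rw [h0, h1, this]
    exact (mul_eq_zero.mp this).resolve_left hNpos.ne'
  have hstep2 : ∑ ij : Idx N m p, y (k+1) ij * tg xs ij
      ≤ ∑ ij : Idx N m p, y (k+1) ij * vstar ij := by
    have hsplit : ∑ ij : Idx N m p, y (k+1) ij * tg xs ij
        = ∑ ij : Idx N m p, y (k+1) ij * vstar ij + ∑ ij : Idx N m p, y (k+1) ij * ev ij := by
      rw [← Finset.sum_add_distrib]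
      apply Finset.sum_congr rfl
      intro ij _
      have : ev ij = tg xs ij - vstar ij := rfl
      rw [this]; ring
    have hneg : ∑ ij : Idx N m p, y (k+1) ij * ev ij ≤ 0 := by
      apply Finset.sum_nonpos
      intro ij _
      obtain ⟨i, jb⟩ := ij
      rw [htj' i jb]
      cases jb with
      | inl j => exact mul_nonpos_of_nonneg_of_nonpos (hy1nn i j) (htle j)
      | inr j => rw [hteq j, mul_zero]
    linarith
  -- Step 3 : the optimality / convexity limit argument
  have hquad : ∀ v : Idx N m p → ℝ, quadForm D⁻¹ v = ∑ ij, (dd ij)⁻¹ * v ij ^ 2 := by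
    intro v
    show v ⬝ᵥ (D⁻¹ *ᵥ v) = _
    rw [hDinv]
    simp only [dotProduct, Matrix.mulVec_diagonal]
    apply Finset.sum_congr rfl
    intro ij _
    ring
  set δ : Idx N m p → ℝ := fun ij => tg xs ij - tg x1 ij with hδdef
  set C : ℝ := (1/2) * ∑ ij, (dd ij)⁻¹ * (δ ij)^2 with hCdef
  have hkey : ∀ t : ℝ, 0 < t → t ≤ 1 →
      F x1 - F xs - ∑ ij, y (k+1) ij * δ ij ≤ t * C := by
    intro t ht ht1
    set w : ∀ i, Fin (d i) → ℝ := fun i => (1 - t) • x1 i + t • xs i with hwdef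
    have hwX : ∀ i, w i ∈ X i := fun i =>
      hXcv i (hxXk i) (hxsX i) (by linarith) ht.le (by ring)
    have hFw : F w ≤ (1 - t) * F x1 + t * F xs := by
      rw [hF, hF, hF, Finset.mul_sum, Finset.mul_sum, ← Finset.sum_add_distrib]
      apply Finset.sum_le_sum
      intro i _
      exact (hf i).2 (Set.mem_univ _) (Set.mem_univ _) (by linarith) ht.le (by ring)
    have htgw : ∀ ij : Idx N m p, (projK (s + tg w) ij)^2
        ≤ (projK u ij)^2 + 2 * projK u ij * (t * δ ij) + (t * δ ij)^2 := by
      intro ij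
      obtain ⟨i, jb⟩ := ij
      cases jb with
      | inl j =>
        have hconv : tg w (i, Sum.inl j)
            ≤ (1-t) * tg x1 (i, Sum.inl j) + t * tg xs (i, Sum.inl j) := by
          rw [htg1, htg1, htg1]
          exact (hg i j).2 (Set.mem_univ _) (Set.mem_univ _) (by linarith) ht.le (by ring)
        have hle : (s + tg w) (i, Sum.inl j) ≤ u (i, Sum.inl j) + t * δ (i, Sum.inl j) := by
          have hu := huap (i, Sum.inl j)
          have hd : δ (i, Sum.inl j) = tg xs (i, Sum.inl j) - tg x1 (i, Sum.inl j) := rfl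
          have hsa : (s + tg w) (i, Sum.inl j) = s (i, Sum.inl j) + tg w (i, Sum.inl j) := rfl
          rw [hsa, hu, hd]
          nlinarith [hconv]
        calc (projK (s + tg w) (i, Sum.inl j))^2
            = (max ((s + tg w) (i, Sum.inl j)) 0)^2 := rfl
          _ ≤ (max (u (i, Sum.inl j) + t * δ (i, Sum.inl j)) 0)^2 := scal2 _ _ hle
          _ ≤ (max (u (i, Sum.inl j)) 0)^2 + 2 * max (u (i, Sum.inl j)) 0 * (t * δ (i, Sum.inl j))
              + (t * δ (i, Sum.inl j))^2 := scal1 _ _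
          _ = (projK u (i, Sum.inl j))^2 + 2 * projK u (i, Sum.inl j) * (t * δ (i, Sum.inl j))
              + (t * δ (i, Sum.inl j))^2 := rfl
      | inr j =>
        have hBw : (B i *ᵥ w i) j = (1-t) * (B i *ᵥ x1 i) j + t * (B i *ᵥ xs i) j := by
          have : w i = (1 - t) • x1 i + t • xs i := rfl
          rw [this, Matrix.mulVec_add, Matrix.mulVec_smul, Matrix.mulVec_smul]
          simp [smul_eq_mul]
        have heq : (s + tg w) (i, Sum.inr j) = u (i, Sum.inr j) + t * δ (i, Sum.inr j) := by
          have hu := huap (i, Sum.inr j)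
          have hd : δ (i, Sum.inr j) = tg xs (i, Sum.inr j) - tg x1 (i, Sum.inr j) := rfl
          have hsa : (s + tg w) (i, Sum.inr j) = s (i, Sum.inr j) + tg w (i, Sum.inr j) := rfl
          rw [hsa, hu, hd, htg2 w i j, htg2 x1 i j, htg2 xs i j]
          simp only [Pi.add_apply]
          rw [hBw]
          ring
        have hpa : projK (s + tg w) (i, Sum.inr j) = (s + tg w) (i, Sum.inr j) := rfl
        have hpb : projK u (i, Sum.inr j) = u (i, Sum.inr j) := rfl
        rw [hpa, hpb, heq]
        ring_nf
        exact le_refl _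
    have hsum1 : ∑ ij : Idx N m p, (dd ij)⁻¹ * (projK (s + tg w) ij)^2
        ≤ ∑ ij : Idx N m p, ((dd ij)⁻¹ * (projK u ij)^2 + 2 * t * (y (k+1) ij * δ ij)
            + t^2 * ((dd ij)⁻¹ * (δ ij)^2)) := by
      apply Finset.sum_le_sum
      intro ij _
      have h := htgw ij
      have hmul := mul_le_mul_of_nonneg_left h (inv_nonneg.mpr (hddpos ij).le)
      calc (dd ij)⁻¹ * (projK (s + tg w) ij)^2
          ≤ (dd ij)⁻¹ * ((projK u ij)^2 + 2 * projK u ij * (t * δ ij) + (t * δ ij)^2) := hmul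
        _ = (dd ij)⁻¹ * (projK u ij)^2 + 2 * t * (((dd ij)⁻¹ * projK u ij) * δ ij)
            + t^2 * ((dd ij)⁻¹ * (δ ij)^2) := by ring
        _ = (dd ij)⁻¹ * (projK u ij)^2 + 2 * t * (y (k+1) ij * δ ij)
            + t^2 * ((dd ij)⁻¹ * (δ ij)^2) := by rw [← hy1 ij]
    have hsum2 : ∑ ij : Idx N m p, ((dd ij)⁻¹ * (projK u ij)^2 + 2 * t * (y (k+1) ij * δ ij)
            + t^2 * ((dd ij)⁻¹ * (δ ij)^2))
        = (∑ ij : Idx N m p, (dd ij)⁻¹ * (projK u ij)^2)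
          + 2 * t * (∑ ij : Idx N m p, y (k+1) ij * δ ij) + t^2 * (2 * C) := by
      rw [Finset.sum_add_distrib, Finset.sum_add_distrib, ← Finset.mul_sum, ← Finset.mul_sum,
        hCdef]
      ring
    have hmin := hminS w hwX
    rw [hquad, hquad] at hmin
    set Su : ℝ := ∑ ij : Idx N m p, (dd ij)⁻¹ * (projK u ij)^2 with hSudef
    set Sw : ℝ := ∑ ij : Idx N m p, (dd ij)⁻¹ * (projK (s + tg w) ij)^2 with hSwdef
    set SY : ℝ := ∑ ij : Idx N m p, y (k+1) ij * δ ij with hSYdef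
    have hA2 : Sw ≤ Su + 2 * t * SY + t^2 * (2 * C) := by
      rw [hSwdef, hSudef, hSYdef]
      calc (∑ ij : Idx N m p, (dd ij)⁻¹ * (projK (s + tg w) ij)^2)
          ≤ ∑ ij : Idx N m p, ((dd ij)⁻¹ * (projK u ij)^2 + 2 * t * (y (k+1) ij * δ ij)
            + t^2 * ((dd ij)⁻¹ * (δ ij)^2)) := hsum1
        _ = _ := hsum2
    have hfinal : t * (F x1 - F xs - SY) ≤ t * (t * C) := by linarith [hmin, hFw, hA2]
    exact le_of_mul_le_mul_left hfinal ht
  have hstep3 : F x1 - F xs ≤ ∑ ij : Idx N m p, y (k+1) ij * δ ij := by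
    by_contra hcon
    push_neg at hcon
    set L : ℝ := F x1 - F xs - ∑ ij, y (k+1) ij * δ ij with hLdef
    have hLpos : 0 < L := by rw [hLdef]; linarith
    rcases le_or_gt C 0 with hC | hC
    · have := hkey 1 one_pos le_rfl
      linarith
    · have htpos : 0 < min 1 (L / (2 * C)) := lt_min one_pos (by positivity)
      have ht := hkey (min 1 (L / (2 * C))) htpos (min_le_left _ _)
      have h5 : min 1 (L / (2 * C)) * C ≤ (L / (2 * C)) * C :=
        mul_le_mul_of_nonneg_right (min_le_right _ _) hC.le
      have h6 : (L / (2 * C)) * C = L / 2 := by field_simp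
      linarith
  -- combine
  rw [hstep1]
  have hδsplit : ∑ ij : Idx N m p, y (k+1) ij * δ ij
      = ∑ ij : Idx N m p, y (k+1) ij * tg xs ij - ∑ ij : Idx N m p, y (k+1) ij * tg x1 ij := by
    rw [← Finset.sum_sub_distrib]
    apply Finset.sum_congr rfl
    intro ij _
    have : δ ij = tg xs ij - tg x1 ij := rfl
    rw [this]; ring
  have hvsplit : ∑ ij : Idx N m p, y (k+1) ij * (vstar ij - tg x1 ij)
      = ∑ ij : Idx N m p, y (k+1) ij * vstar ij - ∑ ij : Idx N m p, y (k+1) ij * tg x1 ij := by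
    rw [← Finset.sum_sub_distrib]
    apply Finset.sum_congr rfl
    intro ij _
    ring
  rw [hvsplit]
  rw [hδsplit] at hstep3
  linarith
end
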